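/- arXiv:2505.04189 — 10 statements merged into one kernel-verified Lean document; each statement's English description precedes it below -/
import Mathlib

section
/- Let k ≥ 1 and let G be a (P₃ ∪ kP₁)-free graph and S ⊆ V(G). If G−S has exactly k connected components, then at most one component of G−S is noncomplete. -/
open SimpleGraph

variable {V : Type*} {α : Type*}

/-- The graph `G − S` obtained by deleting the vertices of `S`. -/
abbrev GDel (G : SimpleGraph V) (S : Set V) : SimpleGraph (Sᶜ : Set V) :=
  G.induce (Sᶜ : Set V)

/-- `w(G − S)`: the number of connected components of `G − S`. -/
noncomputable def numComp (G : SimpleGraph V) (S : Set V) : ℕ :=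
  Nat.card (GDel G S).ConnectedComponent

/-- `S` is a cutset of `G`: deleting `S` disconnects the graph. -/
def IsCutset (G : SimpleGraph V) (S : Set V) : Prop :=
  ¬ (GDel G S).Preconnected

/-- `G` is `t`-tough. -/
def Tough (t : ℝ) (G : SimpleGraph V) : Prop :=
  ∀ S : Set V, IsCutset G S → t * numComp G S ≤ S.ncard

open Classical in
/-- The vertex connectivity of `G`. -/
noncomputable def kappa [Fintype V] (G : SimpleGraph V) : ℕ :=
  if ∃ S : Set V, IsCutset G S then
    sInf {n | ∃ S : Set V, S.ncard = n ∧ IsCutset G S}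
  else Fintype.card V - 1

/-- The independence number of `G`. -/
noncomputable def indepNum [Fintype V] (G : SimpleGraph V) : ℕ :=
  sSup {n | ∃ T : Set V, T.ncard = n ∧ ∀ u ∈ T, ∀ v ∈ T, u ≠ v → ¬ G.Adj u v}

/-- The toughness of `G` (as a real number; meaningful for noncomplete graphs). -/
noncomputable def toughness [Fintype V] (G : SimpleGraph V) : ℝ :=
  sInf {r : ℝ | ∃ S : Set V, IsCutset G S ∧ r = S.ncard / numComp G S}

/-- The graph `P₃ ∪ kP₁`. -/
def P3kP1 (k : ℕ) : SimpleGraph (Fin 3 ⊕ Fin k) :=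
  SimpleGraph.fromRel (fun x y =>
    (x = Sum.inl 0 ∧ y = Sum.inl 1) ∨ (x = Sum.inl 1 ∧ y = Sum.inl 2))

/-- `G` contains no induced copy of `H`. -/
def IndFree (H : SimpleGraph α) (G : SimpleGraph V) : Prop :=
  ¬ ∃ f : α ↪ V, ∀ a b, H.Adj a b ↔ G.Adj (f a) (f b)

/-- A connected component of `G − S` is complete (its vertices form a clique in `G`). -/
def CompComplete (G : SimpleGraph V) (S : Set V)
    (C : (GDel G S).ConnectedComponent) : Prop :=
  ∀ u v : (Sᶜ : Set V), u ∈ C.supp → v ∈ C.supp → (u : V) ≠ v → G.Adj u v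

/-- The vertex set of `G` can be covered by at most `n` pairwise disjoint paths. -/
def PathCover (G : SimpleGraph V) (n : ℕ) : Prop :=
  ∃ k : ℕ, k ≤ n ∧ ∃ P : Fin k → Σ u : V, Σ v : V, G.Walk u v,
    (∀ i, (P i).2.2.IsPath) ∧
    (∀ i j, i ≠ j → ∀ x, x ∈ (P i).2.2.support → x ∉ (P j).2.2.support) ∧
    (∀ x : V, ∃ i, x ∈ (P i).2.2.support)


private lemma findP3aux {W : Type*} (H : SimpleGraph W) :
    ∀ n (u v : W) (p : H.Walk u v), p.length = n → p.IsPath → ¬H.Adj u v → u ≠ v →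
    ∃ b c, H.Adj u b ∧ H.Adj b c ∧ ¬H.Adj u c ∧ u ≠ c := by
  intro n
  induction n using Nat.strong_induction_on with
  | _ n ih =>
    intro u v p hlen hpath hadj hne
    match p with
    | .nil => exact absurd rfl hne
    | .cons h .nil => exact absurd h hadj
    | .cons (v := w) h (.cons (v := x) h' q') =>
      rw [SimpleGraph.Walk.cons_isPath_iff, SimpleGraph.Walk.cons_isPath_iff] at hpath
      by_cases hux : H.Adj u x
      · have hq : (SimpleGraph.Walk.cons hux q').IsPath := by
          rw [SimpleGraph.Walk.cons_isPath_iff]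
          refine ⟨hpath.1.1, fun hmem => hpath.2 ?_⟩
          simp [SimpleGraph.Walk.support_cons, hmem]
        have hl : (SimpleGraph.Walk.cons hux q').length < n := by
          simp only [SimpleGraph.Walk.length_cons] at hlen ⊢
          omega
        exact ih _ hl u _ (SimpleGraph.Walk.cons hux q') rfl hq hadj hne
      · refine ⟨w, x, h, h', hux, fun huv => ?_⟩
        exact hpath.2 (by rw [huv]; simp [SimpleGraph.Walk.support_cons])


set_option maxHeartbeats 1000000 in
/-- If `G` is `(P₃ ∪ kP₁)`-free and `G − S` has exactly `k` components,
then at most one component of `G − S` is noncomplete. -/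
theorem stmt_2 {V : Type*} [Fintype V] (k : ℕ) (hk : 1 ≤ k) (G : SimpleGraph V)
    (hfree : IndFree (P3kP1 k) G) (S : Set V) (hw : numComp G S = k) :
    ∀ C D : (GDel G S).ConnectedComponent,
      ¬ CompComplete G S C → ¬ CompComplete G S D → C = D := by
  classical
  set H := GDel G S with hHdef
  intro C D hC hD
  by_contra hCD
  apply hfree
  unfold CompComplete at hC hD
  push_neg at hC hD
  obtain ⟨u1, v1, hu1, hv1, hne1, hnadj1⟩ := hC
  obtain ⟨u2, v2, hu2, hv2, hne2, hnadj2⟩ := hD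
  have hWadj : ∀ x y : (Sᶜ : Set V), H.Adj x y ↔ G.Adj ↑x ↑y := fun x y => Iff.rfl
  have hcne : ∀ x y : (Sᶜ : Set V),
      H.connectedComponentMk x ≠ H.connectedComponentMk y → ¬ G.Adj ↑x ↑y := by
    intro x y hne hadj
    exact hne (ConnectedComponent.sound ((hWadj x y).mpr hadj).reachable)
  rw [ConnectedComponent.mem_supp_iff] at hu1 hv1 hu2 hv2
  have hr1 : H.Reachable u1 v1 := ConnectedComponent.exact (hu1.trans hv1.symm)
  obtain ⟨p0⟩ := hr1
  have hnadjH : ¬ H.Adj u1 v1 := fun h => hnadj1 ((hWadj _ _).mp h)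
  have hneH : u1 ≠ v1 := fun h => hne1 (by rw [h])
  obtain ⟨b, c, hab, hbc, hac, hacne⟩ :=
    findP3aux H _ u1 v1 p0.toPath.1 rfl p0.toPath.2 hnadjH hneH
  have hnadjH2 : ¬ H.Adj u2 v2 := fun h => hnadj2 ((hWadj _ _).mp h)
  have hneH2 : u2 ≠ v2 := fun h => hne2 (by rw [h])
  have hCb : H.connectedComponentMk b = C :=
    (ConnectedComponent.sound hab.reachable).symm.trans hu1
  have hCc : H.connectedComponentMk c = C :=
    (ConnectedComponent.sound (hab.reachable.trans hbc.reachable)).symm.trans hu1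
  -- cardinalities
  have hcard : Nat.card H.ConnectedComponent = k := hw
  have hfin : Finite H.ConnectedComponent := Nat.finite_of_card_ne_zero (by omega)
  have hk2 : 2 ≤ k := by
    have : Nontrivial H.ConnectedComponent := ⟨⟨C, D, hCD⟩⟩
    have := Finite.one_lt_card_iff_nontrivial.mpr this
    omega
  -- the set of other components
  have hTcard : Nat.card (({C, D}ᶜ : Set H.ConnectedComponent)) = k - 2 := by
    rw [Nat.card_coe_set_eq]
    have h1 := Set.ncard_add_ncard_compl ({C, D} : Set H.ConnectedComponent)
      (Set.toFinite _) (Set.toFinite _)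
    rw [Set.ncard_pair hCD, hcard] at h1
    omega
  have e : (({C, D}ᶜ : Set H.ConnectedComponent)) ≃ Fin (k - 2) :=
    Finite.equivFinOfCardEq hTcard
  -- representative function
  have rep : ∀ E : H.ConnectedComponent, ∃ x, H.connectedComponentMk x = E :=
    fun E => E.exists_rep
  choose r hr using rep
  -- the k independent vertices
  let g : Fin k → (Sᶜ : Set V) := fun i =>
    if h0 : (i : ℕ) = 0 then u2
    else if h1 : (i : ℕ) = 1 then v2
    else r ((e.symm ⟨(i : ℕ) - 2, by have := i.isLt; omega⟩ : _) : H.ConnectedComponent)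
  have hgD : ∀ i : Fin k, (i : ℕ) ≤ 1 → H.connectedComponentMk (g i) = D := by
    intro i hi
    by_cases h0 : (i : ℕ) = 0
    · simp [g, h0, hu2]; exact hu2
    · have h1 : (i : ℕ) = 1 := by omega
      simp [g, h0, h1, hv2]; exact hv2
  have hgE : ∀ (i : Fin k) (h2 : 2 ≤ (i : ℕ)), H.connectedComponentMk (g i) =
      (e.symm ⟨(i : ℕ) - 2, by have := i.isLt; omega⟩ : _) := by
    intro i h2
    have h0 : ¬ (i : ℕ) = 0 := by omega
    have h1 : ¬ (i : ℕ) = 1 := by omega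
    simp [g, h0, h1, hr]
  have hgnotC : ∀ i : Fin k, H.connectedComponentMk (g i) ≠ C := by
    intro i
    by_cases h2 : 2 ≤ (i : ℕ)
    · rw [hgE i h2]
      intro h
      exact (e.symm _).2 (by rw [h]; simp)
    · rw [hgD i (by omega)]
      exact fun h => hCD h.symm
  have hgne : ∀ i j : Fin k, i ≠ j →
      H.connectedComponentMk (g i) ≠ H.connectedComponentMk (g j) ∨
      ((g i : (Sᶜ : Set V)) = u2 ∧ g j = v2) ∨ (g i = v2 ∧ g j = u2) := by
    intro i j hij
    have hij' : (i : ℕ) ≠ (j : ℕ) := fun h => hij (Fin.ext h)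
    by_cases hi : 2 ≤ (i : ℕ)
    · by_cases hj : 2 ≤ (j : ℕ)
      · left
        rw [hgE i hi, hgE j hj]
        intro h
        have h2 := e.symm.injective (Subtype.ext h)
        have h3 : (i : ℕ) - 2 = (j : ℕ) - 2 := congrArg Fin.val h2
        exact hij' (by omega)
      · left
        rw [hgE i hi, hgD j (by omega)]
        intro h
        exact (e.symm _).2 (by rw [h]; simp)
    · by_cases hj : 2 ≤ (j : ℕ)
      · left
        rw [hgD i (by omega), hgE j hj]
        intro h
        exact (e.symm _).2 (by rw [← h]; simp)
      · right
        by_cases h0 : (i : ℕ) = 0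
        · have hj1 : (j : ℕ) = 1 := by omega
          exact Or.inl ⟨by simp [g, h0], by simp [g, show ¬ (j : ℕ) = 0 by omega, hj1]⟩
        · have hi1 : (i : ℕ) = 1 := by omega
          have hj0 : (j : ℕ) = 0 := by omega
          exact Or.inr ⟨by simp [g, h0, hi1], by simp [g, hj0]⟩
  have hgnadj : ∀ i j : Fin k, i ≠ j → ¬ G.Adj (g i) (g j) := by
    intro i j hij
    rcases hgne i j hij with h | ⟨h1, h2⟩ | ⟨h1, h2⟩
    · exact hcne _ _ h
    · rw [h1, h2]; exact fun h => hnadjH2 ((hWadj _ _).mpr h)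
    · rw [h1, h2]; exact fun h => hnadjH2 ((hWadj _ _).mpr h.symm)
  have hginj : Function.Injective g := by
    intro i j hij
    by_contra hne
    rcases hgne i j hne with h | ⟨h1, h2⟩ | ⟨h1, h2⟩
    · exact h (congrArg _ hij)
    · exact hneH2 (h1.symm.trans (hij.trans h2))
    · exact hneH2 (h2.symm.trans (hij.symm.trans h1))
  -- the P3 vertices
  let t : Fin 3 → (Sᶜ : Set V) := ![u1, b, c]
  have htcomp : ∀ j : Fin 3, H.connectedComponentMk (t j) = C := by
    intro j
    fin_cases j
    exacts [hu1, hCb, hCc]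
  have htinj : Function.Injective t := by
    intro i j hij
    have h01 : u1 ≠ b := hab.ne
    have h12 : b ≠ c := hbc.ne
    fin_cases i <;> fin_cases j <;>
      first
        | rfl
        | exact absurd hij h01
        | exact absurd hij h01.symm
        | exact absurd hij h12
        | exact absurd hij h12.symm
        | exact absurd hij hacne
        | exact absurd hij hacne.symm
  -- build the embedding
  let f : Fin 3 ⊕ Fin k → V := Sum.elim (fun j => (t j : V)) (fun i => (g i : V))
  have hfinj : Function.Injective f := by
    intro p q hpq
    rcases p with j | i <;> rcases q with j' | i'
    · exact congrArg Sum.inl (htinj (Subtype.ext hpq))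
    · exact absurd (congrArg H.connectedComponentMk (Subtype.ext (α := V) hpq))
        (by rw [htcomp j]; exact fun h => hgnotC i' h.symm)
    · exact absurd (congrArg H.connectedComponentMk (Subtype.ext (α := V) hpq))
        (by rw [htcomp j']; exact hgnotC i)
    · exact congrArg Sum.inr (hginj (Subtype.ext hpq))
  refine ⟨⟨f, hfinj⟩, ?_⟩
  intro p q
  have hGab : G.Adj ↑u1 ↑b := (hWadj _ _).mp hab
  have hGbc : G.Adj ↑b ↑c := (hWadj _ _).mp hbc
  have hGac : ¬ G.Adj ↑u1 ↑c := fun h => hac ((hWadj _ _).mpr h)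
  have htg : ∀ (j : Fin 3) (i : Fin k), ¬ G.Adj (t j) (g i) :=
    fun j i => hcne _ _ (by rw [htcomp j]; exact fun h => hgnotC i h.symm)
  rcases p with j | i <;> rcases q with j' | i'
  · fin_cases j <;> fin_cases j' <;>
      simp_all [P3kP1, SimpleGraph.fromRel_adj, f, t, Function.Embedding.coeFn_mk] <;>
      first
        | exact hGab
        | exact hGbc
        | exact hGab.symm
        | exact hGbc.symm
        | exact hGac
        | exact fun h => hGac h.symm
        | exact fun h => hacne (Subtype.ext h)
  · simp only [P3kP1, SimpleGraph.fromRel_adj, Function.Embedding.coeFn_mk, Sum.elim_inl,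
      Sum.elim_inr, f]
    constructor
    · rintro ⟨-, (⟨h, h'⟩ | ⟨h, h'⟩)⟩ <;> simp_all
    · exact fun h => absurd h (htg j i')
  · simp only [P3kP1, SimpleGraph.fromRel_adj, Function.Embedding.coeFn_mk, Sum.elim_inl,
      Sum.elim_inr, f]
    constructor
    · rintro ⟨-, (⟨h, h'⟩ | ⟨h, h'⟩)⟩ <;> simp_all
    · exact fun h => absurd h.symm (htg j' i)
  · simp only [P3kP1, SimpleGraph.fromRel_adj, Function.Embedding.coeFn_mk, Sum.elim_inr, f]
    constructor
    · rintro ⟨-, (⟨h, h'⟩ | ⟨h, h'⟩)⟩ <;> simp_all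
    · intro h
      by_cases hii : i = i'
      · exact absurd h (by rw [hii]; exact fun h' => G.loopless.irrefl _ h')
      · exact absurd h (hgnadj i i' hii)
end

section
/- Let k ≥ 2 and let G be a (P₃ ∪ kP₁)-free graph and S ⊆ V(G). If G−S has exactly k connected components and some component of G−S is noncomplete, then that noncomplete component is (P₃ ∪ P₁)-free. -/
open SimpleGraph

variable {V : Type*} {α : Type*}

/-!
An induced `P₃ ∪ P₁` inside the component `C`, together with one vertex from each of the other
`k - 1` components of `G − S`, is an induced `P₃ ∪ kP₁` in `G`: vertices lying in distinct
components of `G − S` are distinct and nonadjacent.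
-/

theorem nonempty_fin_embedding_of_natCard_eq {k : ℕ} (h : Nat.card α = k) :
    Nonempty (Fin k ↪ α) := by
  rcases finite_or_infinite α with hα | hα
  · subst h
    exact ⟨(Finite.equivFin α).symm.toEmbedding⟩
  · rw [Nat.card_eq_zero_of_infinite] at h
    subst h
    exact ⟨Function.Embedding.ofIsEmpty⟩

def SimpleGraph.Embedding.induceImageVal (G : SimpleGraph V) (s : Set V) (T : Set s) :
    G.induce (Subtype.val '' T) ↪g (G.induce s).induce T where
  toFun x := ⟨⟨x, Set.image_val_subset x.2⟩, Set.mem_of_mem_image_val x.2⟩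
  inj' _ _ h := Subtype.ext (congrArg (fun z => z.1.1) h)
  map_rel_iff' := Iff.rfl

theorem IndFree.of_embedding {W : Type*} {H : SimpleGraph α} {G : SimpleGraph V}
    {G' : SimpleGraph W} (h : IndFree H G') (φ : G ↪g G') : IndFree H G := by
  rintro ⟨f, hf⟩
  exact h ⟨f.trans φ.toEmbedding, fun a b => (hf a b).trans φ.map_adj_iff.symm⟩

theorem IndFree.induce {H : SimpleGraph α} {G : SimpleGraph V} (h : IndFree H G) (s : Set V) :
    IndFree H (G.induce s) :=
  h.of_embedding (Embedding.induce s)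

namespace P3kP1

variable {k : ℕ}

def collapse : Fin 3 ⊕ Fin k → Fin 3 ⊕ Fin 1 :=
  Sum.elim Sum.inl fun _ => Sum.inr 0

theorem adj_iff_adj_collapse (x y : Fin 3 ⊕ Fin k) :
    (P3kP1 k).Adj x y ↔ (P3kP1 1).Adj (collapse x) (collapse y) := by
  rcases x with a | j <;> rcases y with b | j' <;> simp [P3kP1, collapse]

theorem isLeft_of_adj {x y : Fin 3 ⊕ Fin k} (h : (P3kP1 k).Adj x y) : x.isLeft ∧ y.isLeft := by
  rcases x with a | j <;> rcases y with b | j' <;> simp_all [P3kP1]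

end P3kP1

open P3kP1 in
theorem IndFree.induce_supp {W : Type*} {G : SimpleGraph W} {k : ℕ}
    (hfree : IndFree (P3kP1 k) G) (ι : Fin k ↪ G.ConnectedComponent) (C : G.ConnectedComponent) :
    IndFree (P3kP1 1) (G.induce C.supp) := by
  classical
  rintro ⟨e, he⟩
  let comp : Fin 3 ⊕ Fin k → G.ConnectedComponent := Sum.elim (fun _ => C) ι
  let F : Fin 3 ⊕ Fin k → W := fun x => if comp x = C then e (collapse x) else (comp x).out
  have hF_of_comp_eq : ∀ x, comp x = C → F x = e (collapse x) := fun x h => if_pos h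
  have hF_comp : ∀ x, G.connectedComponentMk (F x) = comp x := by
    intro x
    by_cases h : comp x = C
    · rw [hF_of_comp_eq x h, h]
      exact (e _).2
    · simp only [F, if_neg h]
      exact Quot.out_eq _
  have h_eq_of_comp_eq : ∀ x y, comp x = comp y → comp x ≠ C → x = y := by
    rintro (a | j) (b | j') h hC <;> simp_all [comp]
  have h_eq_of_collapse_eq :
      ∀ x y, comp x = C → comp y = C → collapse x = collapse y → x = y := by
    rintro (a | j) (b | j') hx hy h <;> simp_all [comp, collapse]
    exact ι.injective (hx.trans hy.symm)
  refine hfree ⟨⟨F, fun x y hxy => ?_⟩, fun x y => ?_⟩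
  · have hc : comp x = comp y := by rw [← hF_comp x, ← hF_comp y, hxy]
    by_cases hC : comp x = C
    · refine h_eq_of_collapse_eq x y hC (hc ▸ hC) (e.injective (Subtype.ext ?_))
      rw [← hF_of_comp_eq x hC, ← hF_of_comp_eq y (hc ▸ hC)]
      exact hxy
    · exact h_eq_of_comp_eq x y hc hC
  · by_cases hc : comp x = comp y
    · by_cases hC : comp x = C
      · change _ ↔ G.Adj (F x) (F y)
        rw [hF_of_comp_eq x hC, hF_of_comp_eq y (hc ▸ hC), adj_iff_adj_collapse, he]
        rfl
      · obtain rfl := h_eq_of_comp_eq x y hc hC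
        exact iff_of_false ((P3kP1 k).irrefl) (G.irrefl)
    · refine iff_of_false (fun h => hc ?_) (fun h => hc ?_)
      · obtain ⟨hx, hy⟩ := isLeft_of_adj h
        rcases x with _ | _ <;> rcases y with _ | _ <;> simp_all [comp]
      · rw [← hF_comp x, ← hF_comp y]
        exact ConnectedComponent.connectedComponentMk_eq_of_adj h

theorem stmt_3_general {V : Type*} (k : ℕ) (G : SimpleGraph V)
    (hfree : IndFree (P3kP1 k) G) (S : Set V) (hw : numComp G S = k)
    (C : (GDel G S).ConnectedComponent) :
    IndFree (P3kP1 1) (G.induce (Subtype.val '' C.supp)) := by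
  obtain ⟨ι⟩ := nonempty_fin_embedding_of_natCard_eq hw
  exact ((hfree.induce Sᶜ).induce_supp ι C).of_embedding (Embedding.induceImageVal G Sᶜ C.supp)

/-- If `G` is `(P₃ ∪ kP₁)`-free (`k ≥ 2`) and `G − S` has exactly `k` components,
then any noncomplete component of `G − S` is `(P₃ ∪ P₁)`-free. -/
theorem stmt_3 {V : Type*} [Fintype V] (k : ℕ) (hk : 2 ≤ k) (G : SimpleGraph V)
    (hfree : IndFree (P3kP1 k) G) (S : Set V) (hw : numComp G S = k)
    (C : (GDel G S).ConnectedComponent) (hC : ¬ CompComplete G S C) :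
    IndFree (P3kP1 1) (G.induce (Subtype.val '' C.supp)) :=
  stmt_3_general k G hfree S hw C
end

section
/- Let k ≥ 1 and let G be a (P₃ ∪ kP₁)-free graph and S ⊆ V(G). If G−S has at least k+1 connected components, then every component of G−S is complete. -/
open SimpleGraph

variable {V : Type*} {α : Type*}

private lemma triple_of_walk {W : Type*} (H : SimpleGraph W) :
    ∀ {u v : W} (p : H.Walk u v), ¬ H.Adj u v → u ≠ v →
      ∃ a b c, a ∈ p.support ∧ b ∈ p.support ∧ c ∈ p.support ∧
        H.Adj a b ∧ H.Adj b c ∧ ¬ H.Adj a c ∧ a ≠ c := by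
  intro u v p
  induction p with
  | nil => intro _ h; exact absurd rfl h
  | cons h q ih =>
    rename_i x y z
    intro hna hne
    by_cases hyz : y = z
    · subst hyz; exact absurd h hna
    by_cases hadj : H.Adj y z
    · exact ⟨x, y, z, by simp, by simp [SimpleGraph.Walk.start_mem_support],
        by simp [SimpleGraph.Walk.end_mem_support], h, hadj, hna, hne⟩
    · obtain ⟨a, b, c, ha, hb, hc, h1, h2, h3, h4⟩ := ih hadj hyz
      exact ⟨a, b, c, by simp [ha], by simp [hb], by simp [hc], h1, h2, h3, h4⟩

/-- If `G` is `(P₃ ∪ kP₁)`-free and `G − S` has at least `k + 1` components,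
then every component of `G − S` is complete. -/
theorem stmt_4 {V : Type*} [Fintype V] (k : ℕ) (hk : 1 ≤ k) (G : SimpleGraph V)
    (hfree : IndFree (P3kP1 k) G) (S : Set V) (hw : k + 1 ≤ numComp G S) :
    ∀ C : (GDel G S).ConnectedComponent, CompComplete G S C := by
  intro C
  by_contra hC
  simp only [CompComplete, not_forall] at hC
  obtain ⟨u, v, hu, hv, huv, hnadj⟩ := hC
  classical
  rw [ConnectedComponent.mem_supp_iff] at hu hv
  have hreach : (GDel G S).Reachable u v := ConnectedComponent.exact (hu.trans hv.symm)
  have hne : u ≠ v := fun h => huv (by rw [h])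
  have hnadjH : ¬ (GDel G S).Adj u v := hnadj
  obtain ⟨p⟩ := hreach
  obtain ⟨a, b, c, ha, hb, hc, hab, hbc, hnac, hac⟩ := triple_of_walk (GDel G S) p hnadjH hne
  have hmem : ∀ x ∈ p.support, (GDel G S).connectedComponentMk x = C := by
    intro x hx
    rw [← hu]
    exact (ConnectedComponent.sound (p.takeUntil x hx).reachable).symm
  have hCa := hmem a ha
  have hCb := hmem b hb
  have hCc := hmem c hc
  -- pick k components different from C
  haveI : Finite (GDel G S).ConnectedComponent := Quot.finite _
  haveI : Fintype (GDel G S).ConnectedComponent := Fintype.ofFinite _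
  have hcard : k + 1 ≤ Fintype.card (GDel G S).ConnectedComponent := by
    rw [← Nat.card_eq_fintype_card]; exact hw
  have hcard' : k ≤ Fintype.card {D : (GDel G S).ConnectedComponent // ¬ D = C} := by
    have h1 : Fintype.card {D : (GDel G S).ConnectedComponent // D = C} = 1 :=
      Fintype.card_eq_one_iff.mpr ⟨⟨C, rfl⟩, fun ⟨D, hD⟩ => Subtype.ext hD⟩
    have h2 := Fintype.card_subtype_compl (fun D : (GDel G S).ConnectedComponent => D = C)
    omega
  obtain ⟨T⟩ : Nonempty (Fin k ↪ {D : (GDel G S).ConnectedComponent // ¬ D = C}) :=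
    Function.Embedding.nonempty_of_card_le (by rwa [Fintype.card_fin])
  have hrep := fun i : Fin k => ((T i).1).exists_rep
  choose x hx using hrep
  have hx' : ∀ i, (GDel G S).connectedComponentMk (x i) = (T i).1 := hx
  have hxC : ∀ i, (GDel G S).connectedComponentMk (x i) ≠ C := fun i h => (T i).2 ((hx' i) ▸ h)
  have hxij : ∀ i j, i ≠ j →
      (GDel G S).connectedComponentMk (x i) ≠ (GDel G S).connectedComponentMk (x j) := by
    intro i j hij h
    rw [hx' i, hx' j] at h
    exact hij (T.injective (Subtype.ext h))
  -- key nonadjacency helper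
  have keyG : ∀ y z : (Sᶜ : Set V),
      (GDel G S).connectedComponentMk y ≠ (GDel G S).connectedComponentMk z →
      ¬ G.Adj y z := by
    intro y z hyz hA
    exact hyz (ConnectedComponent.connectedComponentMk_eq_of_adj (G := GDel G S) hA)
  -- adjacency facts in G
  have gab : G.Adj a b := hab
  have gbc : G.Adj b c := hbc
  have gnac : ¬ G.Adj a c := hnac
  have gCx : ∀ (y : (Sᶜ : Set V)), (GDel G S).connectedComponentMk y = C →
      ∀ i, ¬ G.Adj y (x i) :=
    fun y hy i => keyG y (x i) (by rw [hy]; exact (hxC i).symm)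
  have gxx : ∀ i j, i ≠ j → ¬ G.Adj (x i) (x j) := fun i j hij => keyG _ _ (hxij i j hij)
  -- build the embedding
  have hne3 : ∀ y z : (Sᶜ : Set V), y ≠ z → (y : V) ≠ z := fun y z h h' => h (Subtype.ext h')
  have h1 : (a : V) ≠ b := hne3 _ _ hab.ne
  have h2 : (b : V) ≠ c := hne3 _ _ hbc.ne
  have h3 : (a : V) ≠ c := hne3 _ _ hac
  have h4 : ∀ i, (x i : V) ≠ a := fun i h =>
    hxC i (by rw [show x i = a from Subtype.ext h, hCa])
  have h5 : ∀ i, (x i : V) ≠ b := fun i h =>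
    hxC i (by rw [show x i = b from Subtype.ext h, hCb])
  have h6 : ∀ i, (x i : V) ≠ c := fun i h =>
    hxC i (by rw [show x i = c from Subtype.ext h, hCc])
  have h7 : ∀ i j : Fin k, (x i : V) = x j → i = j := by
    intro i j h
    by_contra hij
    exact hxij i j hij (by rw [Subtype.ext h])
  set F : Fin 3 ⊕ Fin k → V := Sum.elim (![(a : V), b, c]) (fun i => (x i : V)) with hF
  have hFinj : Function.Injective F := by
    rintro (i | i) (j | j) hEq
    · fin_cases i <;> fin_cases j
      · rfl
      · exact absurd hEq h1
      · exact absurd hEq h3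
      · exact absurd hEq.symm h1
      · rfl
      · exact absurd hEq h2
      · exact absurd hEq.symm h3
      · exact absurd hEq.symm h2
      · rfl
    · exfalso; fin_cases i
      · exact h4 j hEq.symm
      · exact h5 j hEq.symm
      · exact h6 j hEq.symm
    · exfalso; fin_cases j
      · exact h4 i hEq
      · exact h5 i hEq
      · exact h6 i hEq
    · exact congrArg Sum.inr (h7 i j hEq)
  apply hfree
  refine ⟨⟨F, hFinj⟩, ?_⟩
  intro pq qq
  simp only [P3kP1, SimpleGraph.fromRel_adj, Function.Embedding.coeFn_mk]
  constructor
  · rintro ⟨hne', (⟨rfl, rfl⟩ | ⟨rfl, rfl⟩) | (⟨rfl, rfl⟩ | ⟨rfl, rfl⟩)⟩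
    · exact gab
    · exact gbc
    · exact gab.symm
    · exact gbc.symm
  · intro hA
    rcases pq with i | i <;> rcases qq with j | j
    · fin_cases i <;> fin_cases j
      · exact absurd hA (G.loopless.irrefl _)
      · exact ⟨by simp, Or.inl (Or.inl ⟨rfl, rfl⟩)⟩
      · exact absurd hA gnac
      · exact ⟨by simp, Or.inr (Or.inl ⟨rfl, rfl⟩)⟩
      · exact absurd hA (G.loopless.irrefl _)
      · exact ⟨by simp, Or.inl (Or.inr ⟨rfl, rfl⟩)⟩
      · exact absurd hA.symm gnac
      · exact ⟨by simp, Or.inr (Or.inr ⟨rfl, rfl⟩)⟩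
      · exact absurd hA (G.loopless.irrefl _)
    · exfalso; fin_cases i
      · exact gCx a hCa j hA
      · exact gCx b hCb j hA
      · exact gCx c hCc j hA
    · exfalso; fin_cases j
      · exact gCx a hCa i hA.symm
      · exact gCx b hCb i hA.symm
      · exact gCx c hCc i hA.symm
    · by_cases hij : i = j
      · subst hij; exact absurd hA (G.loopless.irrefl _)
      · exact absurd hA (gxx i j hij)
end

section
/- Let k ≥ 1 and let G be a (P₃ ∪ kP₁)-free graph and S ⊆ V(G). If G−S has at least k+1 connected components, then every vertex of S having a neighbor in G−S is adjacent to all vertices of some component of G−S. -/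
open SimpleGraph

variable {V : Type*} {α : Type*}

/-! Suppose every component of `G − S` contains a non-neighbour of `v`. On a path inside the
component `C₀` of a neighbour `u` of `v`, running from `u` to a non-neighbour, some edge `ab` has
`v ~ a` and `v ≁ b`, so `v a b` is an induced `P₃`. Non-neighbours of `v` taken from `k` further
components are pairwise non-adjacent and non-adjacent to `a` and `b`, which yields an induced
`P₃ ∪ kP₁`. -/

lemma P3kP1_not_adj_inr {k : ℕ} (j : Fin k) (x : Fin 3 ⊕ Fin k) :
    ¬ (P3kP1 k).Adj (Sum.inr j) x := by
  rintro ⟨-, h | h⟩ <;> simp_all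

lemma not_indFree_P3kP1 {G : SimpleGraph V} {k : ℕ} {x y z : V}
    (hxy : G.Adj x y) (hyz : G.Adj y z) (hxz : x ≠ z) (hnxz : ¬ G.Adj x z) (w : Fin k ↪ V)
    (hw : ∀ i, ∀ u ∈ ({x, y, z} : Set V), u ≠ w i ∧ ¬ G.Adj u (w i))
    (hww : ∀ i j, ¬ G.Adj (w i) (w j)) :
    ¬ IndFree (P3kP1 k) G := by
  have hpath : Function.Injective ![x, y, z] := by
    intro i j h
    fin_cases i <;> fin_cases j <;> simp_all [hxy.ne, hyz.ne, hxy.ne.symm, hyz.ne.symm, hxz.symm]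
  have hmix : ∀ i j, ![x, y, z] i ≠ w j ∧ ¬ G.Adj (![x, y, z] i) (w j) := by
    intro i j
    fin_cases i <;> simp [hw j]
  refine fun hfree => hfree ⟨⟨Sum.elim ![x, y, z] w,
    hpath.sumElim w.injective fun i j => (hmix i j).1⟩, ?_⟩
  have hnzx : ¬ G.Adj z x := fun h => hnxz h.symm
  rintro (i | i) (j | j)
  · fin_cases i <;> fin_cases j <;> simp [P3kP1, hxy, hyz, hnxz, hnzx, hxy.symm, hyz.symm]
  · exact iff_of_false (fun h => P3kP1_not_adj_inr j _ h.symm) (hmix i j).2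
  · exact iff_of_false (P3kP1_not_adj_inr i _) fun h => (hmix j i).2 h.symm
  · exact iff_of_false (P3kP1_not_adj_inr i _) (hww i j)

lemma nonempty_fin_embedding_ne {k : ℕ} (a : α) (h : k + 1 ≤ Nat.card α) :
    Nonempty (Fin k ↪ {b // b ≠ a}) := by
  have : Finite α := Nat.finite_of_card_ne_zero (by omega)
  have := Fintype.ofFinite α
  classical
  apply Function.Embedding.nonempty_of_card_le
  rw [Nat.card_eq_fintype_card] at h
  rw [Fintype.card_fin, Fintype.card_subtype_compl, Fintype.card_subtype_eq]
  omega

lemma ne_and_not_adj_of_connectedComponentMk_ne {G : SimpleGraph V} {S : Set V}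
    {x y : (Sᶜ : Set V)}
    (h : (GDel G S).connectedComponentMk x ≠ (GDel G S).connectedComponentMk y) :
    (x : V) ≠ y ∧ ¬ G.Adj x y :=
  ⟨fun hxy => h (congrArg _ (Subtype.ext hxy)),
    fun hxy => h (ConnectedComponent.connectedComponentMk_eq_of_adj hxy)⟩

theorem stmt_5_general {V : Type*} (k : ℕ) (G : SimpleGraph V)
    (hfree : IndFree (P3kP1 k) G) (S : Set V) (hw : k + 1 ≤ numComp G S) :
    ∀ v ∈ S, (∃ u : (Sᶜ : Set V), G.Adj v u) →
      ∃ C : (GDel G S).ConnectedComponent,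
        ∀ u : (Sᶜ : Set V), u ∈ C.supp → G.Adj v u := by
  rintro v hvS ⟨u, hvu⟩
  by_contra! hc
  choose w hw_supp hvw using hc
  have hmk_w : ∀ C, (GDel G S).connectedComponentMk (w C) = C := hw_supp
  obtain ⟨p⟩ : (GDel G S).Reachable u (w ((GDel G S).connectedComponentMk u)) :=
    ConnectedComponent.exact (hmk_w _).symm
  obtain ⟨d, -, hva, hvb⟩ := p.exists_boundary_dart {x | G.Adj v x} hvu (hvw _)
  set C₀ := (GDel G S).connectedComponentMk d.fst
  have hbC₀ : (GDel G S).connectedComponentMk d.snd = C₀ :=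
    (ConnectedComponent.connectedComponentMk_eq_of_adj d.adj).symm
  obtain ⟨e⟩ := nonempty_fin_embedding_ne C₀ hw
  let w' : (GDel G S).ConnectedComponent ↪ (Sᶜ : Set V) :=
    ⟨w, Function.LeftInverse.injective hmk_w⟩
  let W : Fin k ↪ V :=
    e.trans <| (Function.Embedding.subtype _).trans <| w'.trans (Function.Embedding.subtype _)
  refine not_indFree_P3kP1 hva d.adj (ne_of_mem_of_not_mem hvS d.snd.2) hvb W ?_ ?_ hfree
  · rintro i _ (rfl | rfl | rfl)
    · exact ⟨ne_of_mem_of_not_mem hvS (w (e i)).2, hvw _⟩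
    · exact ne_and_not_adj_of_connectedComponentMk_ne ((e i).2.symm.trans_eq (hmk_w (e i)).symm)
    · exact ne_and_not_adj_of_connectedComponentMk_ne
        (hbC₀.trans_ne ((e i).2.symm.trans_eq (hmk_w (e i)).symm))
  · intro i j
    rcases eq_or_ne i j with rfl | hij
    · exact G.irrefl
    · exact (ne_and_not_adj_of_connectedComponentMk_ne <| (hmk_w (e i)).trans_ne <|
        ((Subtype.coe_injective.comp e.injective).ne hij).trans_eq (hmk_w (e j)).symm).2

/-- If `G` is `(P₃ ∪ kP₁)`-free and `G − S` has at least `k + 1` components,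
then every vertex of `S` with a neighbor in `G − S` is adjacent to all vertices
of some component of `G − S`. -/
theorem stmt_5 {V : Type*} [Fintype V] (k : ℕ) (hk : 1 ≤ k) (G : SimpleGraph V)
    (hfree : IndFree (P3kP1 k) G) (S : Set V) (hw : k + 1 ≤ numComp G S) :
    ∀ v ∈ S, (∃ u : (Sᶜ : Set V), G.Adj v u) →
      ∃ C : (GDel G S).ConnectedComponent,
        ∀ u : (Sᶜ : Set V), u ∈ C.supp → G.Adj v u :=
  stmt_5_general k G hfree S hw
end

section
/- Let k ≥ 1 and let G be a (P₃ ∪ kP₁)-free graph and S ⊆ V(G) with w(G−S) ≥ k+2. Then every vertex of S which has neighbors in at least two components of G−S is adjacent to all vertices of at least w(G−S) − k + 1 components of G−S. -/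
open SimpleGraph

variable {V : Type*} {α : Type*}

private lemma diff_comp {G : SimpleGraph V} {S : Set V}
    {C D : (GDel G S).ConnectedComponent} (hCD : C ≠ D)
    {u w : (Sᶜ : Set V)} (hu : u ∈ C.supp) (hw : w ∈ D.supp) :
    (u : V) ≠ (w : V) ∧ ¬ G.Adj ↑u ↑w := by
  rw [SimpleGraph.ConnectedComponent.mem_supp_iff] at hu hw
  constructor
  · intro h
    exact hCD (by rw [← hu, ← hw]; congr 1; exact Subtype.ext h)
  · intro h
    apply hCD
    rw [← hu, ← hw]
    exact SimpleGraph.ConnectedComponent.sound (SimpleGraph.Adj.reachable (by exact h))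

private lemma crossing {G : SimpleGraph V} {S : Set V} {v : V} :
    ∀ {u x : (Sᶜ : Set V)}, (GDel G S).Walk u x →
    G.Adj v ↑u → ¬ G.Adj v ↑x →
    ∃ a b : (Sᶜ : Set V), (GDel G S).Reachable u a ∧ (GDel G S).Adj a b ∧
      G.Adj v ↑a ∧ ¬ G.Adj v ↑b := by
  intro u x p
  induction p with
  | nil => intro hu hx; exact absurd hu hx
  | @cons a w x h q ih =>
    intro hu hx
    by_cases hw : G.Adj v ↑w
    · obtain ⟨a', b', hr, hab, ha, hb⟩ := ih hw hx
      exact ⟨a', b', (SimpleGraph.Adj.reachable h).trans hr, hab, ha, hb⟩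
    · exact ⟨a, w, SimpleGraph.Reachable.refl _, h, hu, hw⟩

private lemma pick_family {β : Type*} {s : Set β} {k : ℕ} (hk : 1 ≤ k) (h : k ≤ s.ncard) :
    ∃ f : Fin k → β, Function.Injective f ∧ ∀ i, f i ∈ s := by
  obtain ⟨t, hts, htk⟩ := Set.exists_subset_card_eq h
  have htfin : t.Finite := by
    rcases t.finite_or_infinite with hf | hf
    · exact hf
    · exfalso; rw [hf.ncard] at htk; omega
  haveI := htfin.fintype
  have hcard : Fintype.card t = k := by
    rw [← Nat.card_eq_fintype_card, Nat.card_coe_set_eq, htk]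
  let e := Fintype.equivFinOfCardEq hcard
  refine ⟨fun i => ((e.symm i : t) : β), ?_, fun i => hts (e.symm i).2⟩
  intro i j hij
  exact e.symm.injective (Subtype.ext hij)

private lemma build_embedding {k : ℕ} {G : SimpleGraph V} {a b c : V}
    (hab : G.Adj a b) (hbc : G.Adj b c) (hac : ¬ G.Adj a c) (hacne : a ≠ c)
    {g : Fin k → V} (hginj : Function.Injective g)
    (hgne : ∀ i, g i ≠ a ∧ g i ≠ b ∧ g i ≠ c)
    (hgg : ∀ i j, i ≠ j → ¬ G.Adj (g i) (g j))
    (hga : ∀ i, ¬ G.Adj a (g i)) (hgb : ∀ i, ¬ G.Adj b (g i))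
    (hgc : ∀ i, ¬ G.Adj c (g i)) : ¬ IndFree (P3kP1 k) G := by
  intro hfree
  apply hfree
  have hne_ab : a ≠ b := hab.ne
  have hne_bc : b ≠ c := hbc.ne
  refine ⟨⟨Sum.elim (![a, b, c]) g, ?_⟩, ?_⟩
  · rintro (p | i) (q | j) h
    · simp only [Sum.elim_inl] at h
      fin_cases p <;> fin_cases q <;> simp_all
    · simp only [Sum.elim_inl, Sum.elim_inr] at h
      exfalso
      fin_cases p <;>
        [exact (hgne j).1 h.symm; exact (hgne j).2.1 h.symm; exact (hgne j).2.2 h.symm]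
    · simp only [Sum.elim_inl, Sum.elim_inr] at h
      exfalso
      fin_cases q <;>
        [exact (hgne i).1 h; exact (hgne i).2.1 h; exact (hgne i).2.2 h]
    · simp only [Sum.elim_inr] at h
      exact congrArg Sum.inr (hginj h)
  · have hca : ¬ G.Adj c a := fun h => hac h.symm
    have hga' : ∀ i, ¬ G.Adj (g i) a := fun i h => hga i h.symm
    have hgb' : ∀ i, ¬ G.Adj (g i) b := fun i h => hgb i h.symm
    have hgc' : ∀ i, ¬ G.Adj (g i) c := fun i h => hgc i h.symm
    change ∀ x y, (P3kP1 k).Adj x y ↔ G.Adj (Sum.elim ![a, b, c] g x) (Sum.elim ![a, b, c] g y)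
    rintro (p | i) (q | j)
    · fin_cases p <;> fin_cases q <;>
        simp_all [P3kP1, SimpleGraph.fromRel_adj, G.irrefl, hab, hbc, hac, hca,
          hab.symm, hbc.symm]
    · fin_cases p <;>
        simp_all [P3kP1, SimpleGraph.fromRel_adj, hga j, hgb j, hgc j]
    · fin_cases q <;>
        simp_all [P3kP1, SimpleGraph.fromRel_adj, hga' i, hgb' i, hgc' i]
    · by_cases hij : i = j
      · subst hij
        simp [P3kP1, SimpleGraph.fromRel_adj, G.irrefl]
      · simp [P3kP1, SimpleGraph.fromRel_adj, hij, hgg i j hij]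

/-- If `G` is `(P₃ ∪ kP₁)`-free and `w(G − S) ≥ k + 2`, then every vertex of `S`
with neighbors in at least two components of `G − S` is adjacent to all vertices
of at least `w(G − S) − k + 1` components of `G − S`. -/
theorem stmt_6 {V : Type*} [Fintype V] (k : ℕ) (hk : 1 ≤ k) (G : SimpleGraph V)
    (hfree : IndFree (P3kP1 k) G) (S : Set V) (hw : k + 2 ≤ numComp G S) :
    ∀ v ∈ S,
      (∃ C D : (GDel G S).ConnectedComponent, C ≠ D ∧
        (∃ u : (Sᶜ : Set V), u ∈ C.supp ∧ G.Adj v u) ∧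
        (∃ u : (Sᶜ : Set V), u ∈ D.supp ∧ G.Adj v u)) →
      ∃ T : Set ((GDel G S).ConnectedComponent),
        numComp G S - k + 1 ≤ T.ncard ∧
        ∀ C ∈ T, ∀ u : (Sᶜ : Set V), u ∈ C.supp → G.Adj v u := by
  classical
  intro v hvS hex
  obtain ⟨C, D, hCD, ⟨uC, huC, haC⟩, ⟨uD, huD, haD⟩⟩ := hex
  have hSc : ∀ (u : (Sᶜ : Set V)), (u : V) ≠ v := fun u h => u.2 (h ▸ hvS)
  haveI : Finite (GDel G S).ConnectedComponent := Quot.finite _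
  set Good : Set ((GDel G S).ConnectedComponent) :=
    {E | ∀ u : (Sᶜ : Set V), u ∈ E.supp → G.Adj v u} with hGooddef
  have hsum : Good.ncard + Goodᶜ.ncard = numComp G S := Set.ncard_add_ncard_compl Good
  refine ⟨Good, ?_, fun E hE u hu => hE u hu⟩
  suffices hB : Goodᶜ.ncard + 1 ≤ k by omega
  by_contra hBlt
  push_neg at hBlt
  have hBk : k ≤ Goodᶜ.ncard := by omega
  have hbadex : ∀ E ∈ Goodᶜ, ∃ x : (Sᶜ : Set V), x ∈ E.supp ∧ ¬ G.Adj v ↑x := by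
    intro E hE
    simp only [Set.mem_compl_iff, hGooddef, Set.mem_setOf_eq] at hE
    push_neg at hE; exact hE
  by_cases hg2 : 2 ≤ Good.ncard
  · -- two good components: P3 = u1 - v - u2
    obtain ⟨gf, gfinj, gfmem⟩ := pick_family (by norm_num) hg2
    obtain ⟨u1, hu1⟩ := (gf 0).exists_rep
    obtain ⟨u2, hu2⟩ := (gf 1).exists_rep
    have hu1m : u1 ∈ (gf 0).supp := hu1
    have hu2m : u2 ∈ (gf 1).supp := hu2
    have hF12 : gf 0 ≠ gf 1 := fun h => (by decide : (0 : Fin 2) ≠ 1) (gfinj h)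
    have hadj1 : G.Adj v ↑u1 := gfmem 0 u1 hu1m
    have hadj2 : G.Adj v ↑u2 := gfmem 1 u2 hu2m
    obtain ⟨cf, cfinj, cfmem⟩ := pick_family hk hBk
    choose xc hxcm hxca using fun i => hbadex (cf i) (cfmem i)
    have hcfne : ∀ i F, F ∈ Good → cf i ≠ F := fun i F hF h => (cfmem i) (h ▸ hF)
    refine build_embedding (a := (u1 : V)) (b := v) (c := (u2 : V))
      hadj1.symm hadj2 (diff_comp hF12 hu1m hu2m).2 (diff_comp hF12 hu1m hu2m).1
      (g := fun i => (xc i : V)) ?_ ?_ ?_ ?_ ?_ ?_ hfree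
    · intro i j hij
      apply cfinj
      have h1 := (SimpleGraph.ConnectedComponent.mem_supp_iff _ _).mp (hxcm i)
      have h2 := (SimpleGraph.ConnectedComponent.mem_supp_iff _ _).mp (hxcm j)
      rw [← h1, ← h2]
      congr 1
      exact Subtype.ext hij
    · intro i
      refine ⟨(diff_comp (hcfne i _ (gfmem 0)) (hxcm i) hu1m).1, hSc _, 
        (diff_comp (hcfne i _ (gfmem 1)) (hxcm i) hu2m).1⟩
    · intro i j hij
      exact (diff_comp (fun h => hij (cfinj h)) (hxcm i) (hxcm j)).2
    · intro i
      intro h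
      exact (diff_comp (hcfne i _ (gfmem 0)) (hxcm i) hu1m).2 h.symm
    · exact hxca
    · intro i h
      exact (diff_comp (hcfne i _ (gfmem 1)) (hxcm i) hu2m).2 h.symm
  · -- at most one good component
    push_neg at hg2
    have hEbad : ∃ (E : (GDel G S).ConnectedComponent) (u : (Sᶜ : Set V)),
        E ∈ Goodᶜ ∧ u ∈ E.supp ∧ G.Adj v ↑u := by
      by_cases hCg : C ∈ Good
      · by_cases hDg : D ∈ Good
        · exfalso
          have : ({C, D} : Set _).ncard ≤ Good.ncard := by
            apply Set.ncard_le_ncard _ (Set.toFinite _)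
            intro E hE
            rcases hE with h | h
            · exact h ▸ hCg
            · exact h ▸ hDg
          rw [Set.ncard_pair hCD] at this
          omega
        · exact ⟨D, uD, hDg, huD, haD⟩
      · exact ⟨C, uC, hCg, huC, haC⟩
    obtain ⟨E, uE, hEb, huEm, haE⟩ := hEbad
    obtain ⟨x0, hx0m, hx0a⟩ := hbadex E hEb
    have hreach : (GDel G S).Reachable uE x0 := by
      rw [SimpleGraph.ConnectedComponent.mem_supp_iff] at huEm hx0m
      exact SimpleGraph.ConnectedComponent.exact (huEm.trans hx0m.symm)
    obtain ⟨p⟩ := hreach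
    obtain ⟨a, b, hra, hadjab, hva, hvb⟩ := crossing p haE hx0a
    have ham : a ∈ E.supp := by
      rw [SimpleGraph.ConnectedComponent.mem_supp_iff] at huEm ⊢
      rw [← huEm]
      exact (SimpleGraph.ConnectedComponent.sound hra).symm
    have hbm : b ∈ E.supp := by
      rw [SimpleGraph.ConnectedComponent.mem_supp_iff] at ham ⊢
      rw [← ham]
      exact (SimpleGraph.ConnectedComponent.sound hadjab.reachable).symm
    have hcard2 : k ≤ (Goodᶜ \ {E}).ncard := by
      rw [Set.ncard_diff_singleton_of_mem hEb]
      omega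
    obtain ⟨cf, cfinj, cfmem⟩ := pick_family hk hcard2
    have cfbad : ∀ i, cf i ∈ Goodᶜ := fun i => (cfmem i).1
    have cfne : ∀ i, cf i ≠ E := fun i => (cfmem i).2
    choose xc hxcm hxca using fun i => hbadex (cf i) (cfbad i)
    refine build_embedding (a := v) (b := (a : V)) (c := (b : V))
      hva (by exact hadjab) hvb (hSc b).symm
      (g := fun i => (xc i : V)) ?_ ?_ ?_ ?_ ?_ ?_ hfree
    · intro i j hij
      apply cfinj
      have h1 := (SimpleGraph.ConnectedComponent.mem_supp_iff _ _).mp (hxcm i)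
      have h2 := (SimpleGraph.ConnectedComponent.mem_supp_iff _ _).mp (hxcm j)
      rw [← h1, ← h2]
      congr 1
      exact Subtype.ext hij
    · intro i
      exact ⟨hSc _, (diff_comp (cfne i) (hxcm i) ham).1,
        (diff_comp (cfne i) (hxcm i) hbm).1⟩
    · intro i j hij
      exact (diff_comp (fun h => hij (cfinj h)) (hxcm i) (hxcm j)).2
    · exact hxca
    · intro i h
      exact (diff_comp (cfne i) (hxcm i) ham).2 h.symm
    · intro i h
      exact (diff_comp (cfne i) (hxcm i) hbm).2 h.symm
end

section
/- Let G be a (P₃ ∪ P₁)-free connected noncomplete graph with toughness τ(G) satisfying 0 < τ(G) ≤ 1, and let S be a tough set of G (a cutset achieving |S| / w(G−S) = τ(G)). Then w(G−S) = α(G), the independence number of G. -/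
open SimpleGraph

variable {V : Type*} {α : Type*}

set_option linter.unusedSectionVars false
set_option linter.unreachableTactic false
set_option linter.unusedTactic false
set_option linter.unusedVariables false
set_option maxHeartbeats 1600000

lemma exists_P3 {W : Type*} {H : SimpleGraph W} {u v : W} (p : H.Walk u v)
    (huv : ¬ H.Adj u v) (hne : u ≠ v) :
    ∃ x y z : W, H.Adj x y ∧ H.Adj y z ∧ ¬ H.Adj x z ∧ x ≠ z ∧ H.Reachable u x := by
  induction p with
  | nil => exact absurd rfl hne
  | @cons a b c h q ih =>
    by_cases hbc : b = c
    · subst hbc; exact absurd h huv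
    by_cases hb : H.Adj b c
    · exact ⟨a, b, c, h, hb, huv, hne, Reachable.refl a⟩
    · obtain ⟨x, y, z, h1, h2, h3, h4, h5⟩ := ih hb hbc
      exact ⟨x, y, z, h1, h2, h3, h4, (h.reachable).trans h5⟩


lemma P3_dominates {V : Type*} {G : SimpleGraph V} (hfree : IndFree (P3kP1 1) G) {x y z d : V}
    (hxy : G.Adj x y) (hyz : G.Adj y z) (hxz : ¬ G.Adj x z) (hxzne : x ≠ z)
    (hdx : ¬ G.Adj d x) (hdy : ¬ G.Adj d y) (hdz : ¬ G.Adj d z) : False := by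
  have hdx' : d ≠ x := fun h => hdy (h ▸ hxy)
  have hdy' : d ≠ y := fun h => hdx (h ▸ hxy.symm)
  have hdz' : d ≠ z := fun h => hdy (h ▸ hyz.symm)
  have hxy' : x ≠ y := hxy.ne
  have hyz' : y ≠ z := hyz.ne
  apply hfree
  refine ⟨⟨Sum.elim ![x, y, z] (fun _ => d), ?_⟩, ?_⟩
  · rintro (a | a) (b | b) h <;> fin_cases a <;> fin_cases b <;>
      simp_all [Matrix.cons_val_zero, Matrix.cons_val_one] <;> tauto
  · rintro (a | a) (b | b) <;> fin_cases a <;> fin_cases b <;>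
      constructor <;>
      intro h <;>
      simp_all [P3kP1, SimpleGraph.fromRel_adj, G.irrefl] <;>
      first
        | tauto
        | (exact hdx h.symm) | (exact hdy h.symm) | (exact hdz h.symm)
        | (exact hxz h.symm)


section A

variable {V : Type*} [Fintype V] {G : SimpleGraph V} {S : Set V}

lemma gdel_adj {u v : (Sᶜ : Set V)} : (GDel G S).Adj u v ↔ G.Adj ↑u ↑v := Iff.rfl

lemma comp_ne_ne {u v : (Sᶜ : Set V)}
    (h : (GDel G S).connectedComponentMk u ≠ (GDel G S).connectedComponentMk v) :
    (↑u : V) ≠ ↑v := fun he => h (by rw [Subtype.ext he])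

lemma comp_ne_nonadj {u v : (Sᶜ : Set V)}
    (h : (GDel G S).connectedComponentMk u ≠ (GDel G S).connectedComponentMk v) :
    ¬ G.Adj ↑u ↑v := fun ha =>
  h (ConnectedComponent.sound (SimpleGraph.Adj.reachable (gdel_adj.mpr ha)))




lemma cutset_two_comps (hS : IsCutset G S) :
    ∃ C₁ C₂ : (GDel G S).ConnectedComponent, C₁ ≠ C₂ := by
  rw [IsCutset, Preconnected] at hS
  push_neg at hS
  obtain ⟨u, v, h⟩ := hS
  exact ⟨(GDel G S).connectedComponentMk u, (GDel G S).connectedComponentMk v,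
    fun he => h (ConnectedComponent.exact he)⟩

lemma two_le_numComp (hS : IsCutset G S) : 2 ≤ numComp G S := by
  obtain ⟨C₁, C₂, h⟩ := cutset_two_comps hS
  have h2 : ({C₁, C₂} : Set (GDel G S).ConnectedComponent).ncard = 2 := Set.ncard_pair h
  have := Set.ncard_le_ncard (Set.subset_univ ({C₁, C₂} : Set (GDel G S).ConnectedComponent))
    (Set.toFinite _)
  rw [Set.ncard_univ, h2] at this
  exact this

lemma comps_complete (hfree : IndFree (P3kP1 1) G) (hS : IsCutset G S) :
    ∀ C, CompComplete G S C := by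
  intro C u v hu hv hne
  by_contra hadj
  rw [ConnectedComponent.mem_supp_iff] at hu hv
  have hreach : (GDel G S).Reachable u v := ConnectedComponent.exact (hu.trans hv.symm)
  obtain ⟨p⟩ := hreach
  have hne' : u ≠ v := fun h => hne (congrArg _ h)
  obtain ⟨x, y, z, h1, h2, h3, h4, h5⟩ := exists_P3 p (fun h => hadj h) hne'
  -- x, y, z all lie in component C
  have hx : (GDel G S).connectedComponentMk x = C := by
    rw [← hu]; exact (ConnectedComponent.sound h5).symm
  have hy : (GDel G S).connectedComponentMk y = C :=
    (ConnectedComponent.sound h1.symm.reachable).trans hx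
  have hz : (GDel G S).connectedComponentMk z = C :=
    (ConnectedComponent.sound h2.symm.reachable).trans hy
  -- find a vertex in another component
  obtain ⟨C₁, C₂, hC⟩ := cutset_two_comps hS
  have : ∃ D : (GDel G S).ConnectedComponent, D ≠ C := by
    by_cases h : C₁ = C
    · exact ⟨C₂, fun he => hC (h.trans he.symm)⟩
    · exact ⟨C₁, h⟩
  obtain ⟨D, hD⟩ := this
  obtain ⟨d, hd⟩ := Quot.exists_rep D
  have hd' : (GDel G S).connectedComponentMk d = D := hd
  have hdC : (GDel G S).connectedComponentMk d ≠ C := fun h => hD (hd'.symm.trans h)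
  exact P3_dominates hfree (gdel_adj.mp h1) (gdel_adj.mp h2) (fun h => h3 h)
    (fun h => h4 (Subtype.ext h))
    (comp_ne_nonadj (fun h => hdC (h.trans hx))) (comp_ne_nonadj (fun h => hdC (h.trans hy)))
    (comp_ne_nonadj (fun h => hdC (h.trans hz)))
end A

section B
variable {V : Type*} [Fintype V] {G : SimpleGraph V} {S : Set V}

lemma toughness_nonneg_mem : ∀ r ∈ {r : ℝ | ∃ S : Set V, IsCutset G S ∧ r = S.ncard / numComp G S},
    (0:ℝ) ≤ r := by
  rintro r ⟨T, _, rfl⟩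
  positivity

lemma toughness_le {T : Set V} (hT : IsCutset G T) :
    toughness G ≤ (T.ncard : ℝ) / numComp G T :=
  csInf_le ⟨0, toughness_nonneg_mem⟩ ⟨T, hT, rfl⟩

lemma tough_set_two_nbrs (h0 : 0 < toughness G)
    (hS : IsCutset G S) (htight : (S.ncard : ℝ) / numComp G S = toughness G)
    {s : V} (hs : s ∈ S) :
    ∃ u v : (Sᶜ : Set V), G.Adj s ↑u ∧ G.Adj s ↑v ∧
      (GDel G S).connectedComponentMk u ≠ (GDel G S).connectedComponentMk v := by
  by_contra hcon
  push_neg at hcon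
  -- hcon : ∀ u v, Adj s u → Adj s v → mk u = mk v
  set S' := S \ {s} with hS'
  have hmem : ∀ u : (Sᶜ : Set V), (↑u : V) ∈ (S'ᶜ : Set V) := by
    intro u hu
    exact u.2 hu.1
  have hsmem : ∀ x : (S'ᶜ : Set V), (↑x : V) ≠ s → (↑x : V) ∈ (Sᶜ : Set V) := by
    intro x hx hmemS
    exact x.2 ⟨hmemS, hx⟩
  -- key walk lemma
  have key : ∀ (a b : (S'ᶜ : Set V)) (p : (GDel G S').Walk a b) (v : (Sᶜ : Set V)),
      (↑b : V) = ↑v → ∀ u : (Sᶜ : Set V),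
      ((↑a : V) = ↑u ∨ ((↑a : V) = s ∧ G.Adj s ↑u)) →
      (GDel G S).connectedComponentMk u = (GDel G S).connectedComponentMk v := by
    intro a b p
    induction p with
    | @nil a =>
      intro v hv u hcond
      rcases hcond with h | ⟨h, _⟩
      · have : u = v := Subtype.ext (h.symm.trans hv)
        rw [this]
      · exact absurd (h ▸ hv ▸ v.2) (fun h2 => h2 hs)
    | @cons a b' c h q ih =>
      intro v hv u hcond
      have hab : G.Adj ↑a ↑b' := h
      by_cases hb's : (↑b' : V) = s
      · rcases hcond with ha | ⟨ha, hadj⟩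
        · refine ih v hv u (Or.inr ⟨hb's, ?_⟩)
          rw [← hb's, ← ha]
          exact hab.symm
        · rw [ha, hb's] at hab
          exact absurd hab (G.irrefl)
      · set b'' : (Sᶜ : Set V) := ⟨↑b', hsmem b' hb's⟩ with hb''
        have hstep : (GDel G S).connectedComponentMk u = (GDel G S).connectedComponentMk b'' := by
          rcases hcond with ha | ⟨ha, hadj⟩
          · apply ConnectedComponent.sound
            apply SimpleGraph.Adj.reachable
            show G.Adj ↑u ↑b''
            rw [← ha]
            exact hab
          · apply hcon u b'' hadj
            rw [← ha]
            exact hab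
        rw [hstep]
        exact ih v hv b'' (Or.inl rfl)
  -- S' is a cutset
  have hScut : IsCutset G S' := by
    rw [IsCutset, Preconnected] at hS ⊢
    push_neg at hS
    obtain ⟨u₀, v₀, hr⟩ := hS
    intro hpre
    obtain ⟨p⟩ := hpre ⟨↑u₀, hmem u₀⟩ ⟨↑v₀, hmem v₀⟩
    exact hr (ConnectedComponent.exact (key _ _ p v₀ rfl u₀ (Or.inl rfl)))
  -- numComp does not decrease
  have hwle : numComp G S ≤ numComp G S' := by
    set rep : (GDel G S).ConnectedComponent → (Sᶜ : Set V) :=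
      fun C => (Quot.exists_rep C).choose with hrep
    have hrepeq : ∀ C, (GDel G S).connectedComponentMk (rep C) = C :=
      fun C => (Quot.exists_rep C).choose_spec
    set F : (GDel G S).ConnectedComponent → (GDel G S').ConnectedComponent :=
      fun C => (GDel G S').connectedComponentMk ⟨↑(rep C), hmem (rep C)⟩ with hF
    have hFinj : Function.Injective F := by
      intro C D hCD
      obtain ⟨p⟩ := ConnectedComponent.exact hCD
      have := key _ _ p (rep D) rfl (rep C) (Or.inl rfl)
      rw [hrepeq, hrepeq] at this
      exact this
    exact Nat.card_le_card_of_injective F hFinj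
  -- arithmetic contradiction
  have hn1 : 1 ≤ S.ncard := by
    by_contra hn
    push_neg at hn
    have h : S.ncard = 0 := by omega
    rw [h] at htight
    norm_num at htight
    linarith [htight]
  have hw2 : 2 ≤ numComp G S := two_le_numComp hS
  have hcard : S'.ncard = S.ncard - 1 := Set.ncard_diff_singleton_of_mem hs
  have hτle := toughness_le hScut
  rw [← htight] at hτle
  have hw0 : (0:ℝ) < (numComp G S : ℝ) := by positivity
  have hw'0 : (0:ℝ) < (numComp G S' : ℝ) := by
    have : 0 < numComp G S' := lt_of_lt_of_le (by omega) hwle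
    positivity
  have hcast : (S'.ncard : ℝ) = (S.ncard : ℝ) - 1 := by
    rw [hcard]
    push_cast [Nat.cast_sub hn1]
    ring
  have hlt : (S'.ncard : ℝ) / numComp G S' < (S.ncard : ℝ) / numComp G S := by
    have h1 : (S'.ncard : ℝ) / numComp G S' ≤ (S'.ncard : ℝ) / numComp G S := by
      apply div_le_div_of_nonneg_left _ hw0 _
      · have : (1:ℝ) ≤ (S.ncard : ℝ) := by exact_mod_cast hn1
        rw [hcast]; linarith
      · exact_mod_cast hwle
    have h2 : (S'.ncard : ℝ) / numComp G S < (S.ncard : ℝ) / numComp G S := by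
      apply div_lt_div_of_pos_right _ hw0
      rw [hcast]; linarith
    linarith
  linarith
end B

section C
variable {V : Type*} [Fintype V] {G : SimpleGraph V} {S : Set V}

lemma indep_le_numComp (hfree : IndFree (P3kP1 1) G)
    (h0 : 0 < toughness G) (h1 : toughness G ≤ 1)
    (hS : IsCutset G S) (htight : (S.ncard : ℝ) / numComp G S = toughness G)
    (A : Set V) (hA : ∀ u ∈ A, ∀ v ∈ A, u ≠ v → ¬ G.Adj u v) :
    A.ncard ≤ numComp G S := by
  have hcc := comps_complete hfree hS
  have adj_same : ∀ u v : (Sᶜ : Set V),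
      (GDel G S).connectedComponentMk u = (GDel G S).connectedComponentMk v →
      (↑u : V) ≠ ↑v → G.Adj ↑u ↑v := fun u v h hne =>
    hcc ((GDel G S).connectedComponentMk v) u v
      ((ConnectedComponent.mem_supp_iff _ _).mpr h)
      ((ConnectedComponent.mem_supp_iff _ _).mpr rfl) hne
  have hw2 : 2 ≤ numComp G S := two_le_numComp hS
  have hw0 : (0:ℝ) < (numComp G S : ℝ) := by positivity
  have hSw : S.ncard ≤ numComp G S := by
    have : (S.ncard : ℝ) / numComp G S ≤ 1 := htight ▸ h1
    have := (div_le_one hw0).mp this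
    exact_mod_cast this
  -- counting for independent subsets of Sᶜ
  have hcountC : ∀ B : Set V, (∀ b ∈ B, b ∈ A) → (∀ b ∈ B, b ∉ S) →
      B.ncard ≤ numComp G S := by
    intro B hBA hBS
    rw [← Nat.card_coe_set_eq]
    refine Nat.card_le_card_of_injective
      (fun b => (GDel G S).connectedComponentMk ⟨↑b, hBS ↑b b.2⟩) ?_
    intro b₁ b₂ heq
    by_contra hne
    have hne' : (↑b₁ : V) ≠ ↑b₂ := fun h => hne (Subtype.ext h)
    exact hA ↑b₁ (hBA _ b₁.2) ↑b₂ (hBA _ b₂.2) hne'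
      (adj_same ⟨↑b₁, hBS _ b₁.2⟩ ⟨↑b₂, hBS _ b₂.2⟩ heq hne')
  by_cases hAcase : ∀ b ∈ A, b ∉ S
  · exact hcountC A (fun b hb => hb) hAcase
  push_neg at hAcase
  obtain ⟨s, hsA, hsS⟩ := hAcase
  obtain ⟨x₀, y₀, hx₀, hy₀, hxy₀⟩ := tough_set_two_nbrs h0 hS htight hsS
  have claim : ∀ b : (Sᶜ : Set V), ↑b ∈ A →
      (GDel G S).connectedComponentMk b = (GDel G S).connectedComponentMk x₀ ∨
      (GDel G S).connectedComponentMk b = (GDel G S).connectedComponentMk y₀ := by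
    intro b hb
    by_contra hc
    push_neg at hc
    refine P3_dominates hfree (G := G) (x := ↑x₀) (y := s) (z := ↑y₀) (d := ↑b)
      hx₀.symm hy₀ (comp_ne_nonadj hxy₀) (comp_ne_ne hxy₀)
      (comp_ne_nonadj hc.1) ?_ (comp_ne_nonadj hc.2)
    exact hA ↑b hb s hsA (fun h => b.2 (by rw [h]; exact hsS))
  by_cases hAS : ∀ b ∈ A, b ∈ S
  · calc A.ncard ≤ S.ncard := Set.ncard_le_ncard hAS (Set.toFinite _)
      _ ≤ numComp G S := hSw
  push_neg at hAS
  obtain ⟨a, haA, haS⟩ := hAS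
  have helper : ∀ x y : (Sᶜ : Set V), G.Adj s ↑x → G.Adj s ↑y →
      (GDel G S).connectedComponentMk x ≠ (GDel G S).connectedComponentMk y →
      (GDel G S).connectedComponentMk ⟨a, haS⟩ = (GDel G S).connectedComponentMk x →
      (∀ b : (Sᶜ : Set V), ↑b ∈ A →
        (GDel G S).connectedComponentMk b = (GDel G S).connectedComponentMk x ∨
        (GDel G S).connectedComponentMk b = (GDel G S).connectedComponentMk y) →
      A.ncard ≤ numComp G S := by
    intro x y hx hy hxy hax hclaim
    set a' : (Sᶜ : Set V) := ⟨a, haS⟩ with ha'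
    have hane_s : a ≠ s := fun h => haS (by rw [h]; exact hsS)
    have hnadj_as : ¬ G.Adj a s := hA a haA s hsA hane_s
    have haxne : a ≠ (↑x : V) := fun h => hnadj_as (by rw [h]; exact hx.symm)
    have p1 : G.Adj a ↑x := adj_same a' x hax haxne
    have p2 : G.Adj ↑x s := hx.symm
    -- (ii) no A-vertex outside S lies in y's component
    have hnoy : ∀ b : (Sᶜ : Set V), ↑b ∈ A →
        (GDel G S).connectedComponentMk b ≠ (GDel G S).connectedComponentMk y := by
      intro b hb hby
      have hbx : (GDel G S).connectedComponentMk b ≠ (GDel G S).connectedComponentMk x :=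
        fun h => hxy (h.symm.trans hby)
      have hba : (GDel G S).connectedComponentMk b ≠ (GDel G S).connectedComponentMk a' :=
        fun h => hbx (h.trans hax)
      exact P3_dominates hfree (G := G) (x := a) (y := ↑x) (z := s) (d := ↑b)
        p1 p2 hnadj_as hane_s
        (comp_ne_nonadj hba) (comp_ne_nonadj hbx)
        (hA ↑b hb s hsA (fun h => b.2 (by rw [h]; exact hsS)))
    -- (iii) the only A-vertex outside S is a
    have honly : ∀ b ∈ A, b ∉ S → b = a := by
      intro b hbA hbS
      rcases hclaim ⟨b, hbS⟩ hbA with h | h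
      · by_contra hba
        have h' : (GDel G S).connectedComponentMk (⟨b, hbS⟩ : (Sᶜ : Set V)) =
            (GDel G S).connectedComponentMk a' := by
          rcases hclaim a' haA with h2 | h2
          · exact h.trans h2.symm
          · exact absurd h2 (hnoy a' haA)
        exact hA b hbA a haA hba (adj_same ⟨b, hbS⟩ a' h' hba)
      · exact absurd h (hnoy ⟨b, hbS⟩ hbA)
    have hsubset : A ⊆ (A ∩ S) ∪ {a} := by
      intro t ht
      by_cases htS : t ∈ S
      · exact Or.inl ⟨ht, htS⟩
      · exact Or.inr (honly t ht htS)
    have hcount1 : A.ncard ≤ (A ∩ S).ncard + 1 := by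
      calc A.ncard ≤ ((A ∩ S) ∪ {a}).ncard := Set.ncard_le_ncard hsubset (Set.toFinite _)
        _ ≤ (A ∩ S).ncard + ({a} : Set V).ncard := Set.ncard_union_le _ _
        _ = (A ∩ S).ncard + 1 := by rw [Set.ncard_singleton]
    by_contra hbig
    push_neg at hbig
    have hASS : (A ∩ S).ncard ≤ S.ncard := Set.ncard_le_ncard Set.inter_subset_right (Set.toFinite _)
    have hASw : numComp G S ≤ (A ∩ S).ncard := by omega
    have hASeq : A ∩ S = S := Set.eq_of_subset_of_ncard_le Set.inter_subset_right (by omega)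
    have hSsub : S ⊆ A := by
      intro t ht
      rw [← hASeq] at ht
      exact ht.1
    have hnadjSa : ∀ t ∈ S, ¬ G.Adj t a :=
      fun t ht => hA t (hSsub ht) a haA (fun h => haS (h ▸ ht))
    set D := (GDel G S).connectedComponentMk a' with hD
    by_cases hc1 : ∃ t ∈ S, ∃ u v : (Sᶜ : Set V), G.Adj t ↑u ∧ G.Adj t ↑v ∧
        (GDel G S).connectedComponentMk u ≠ (GDel G S).connectedComponentMk v ∧
        (GDel G S).connectedComponentMk u ≠ D ∧ (GDel G S).connectedComponentMk v ≠ D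
    · obtain ⟨t, ht, u, v, a1, a2, a3, a4, a5⟩ := hc1
      exact P3_dominates hfree (G := G) (x := ↑u) (y := t) (z := ↑v) (d := a)
        a1.symm a2 (comp_ne_nonadj a3) (comp_ne_ne a3)
        (fun h => comp_ne_nonadj a4 h.symm) (fun h => hnadjSa t ht h.symm)
        (fun h => comp_ne_nonadj a5 h.symm)
    push_neg at hc1
    have hprop : ∀ t ∈ S, ∀ u v : (Sᶜ : Set V), G.Adj t ↑u → G.Adj t ↑v →
        (GDel G S).connectedComponentMk u ≠ D → (GDel G S).connectedComponentMk v ≠ D →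
        (GDel G S).connectedComponentMk u = (GDel G S).connectedComponentMk v := by
      intro t ht u v au av hu hv
      by_contra hne
      exact hv (hc1 t ht u v au av hne hu)
    have hed : ∀ t ∈ S, ∃ e f : (Sᶜ : Set V), G.Adj t ↑e ∧ G.Adj t ↑f ∧
        (GDel G S).connectedComponentMk e ≠ D ∧ (GDel G S).connectedComponentMk f = D := by
      intro t ht
      obtain ⟨u, v, au, av, huv⟩ := tough_set_two_nbrs h0 hS htight ht
      by_cases hu : (GDel G S).connectedComponentMk u = D
      · exact ⟨v, u, av, au, fun h => huv (hu.trans h.symm), hu⟩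
      · exact ⟨u, v, au, av, hu, hc1 t ht u v au av huv hu⟩
    obtain ⟨e1, d1, he1, hd1, he1D, hd1D⟩ := hed s hsS
    by_cases hc2 : ∃ t ∈ S, ∃ u : (Sᶜ : Set V), G.Adj t ↑u ∧
        (GDel G S).connectedComponentMk u ≠ D ∧
        (GDel G S).connectedComponentMk u ≠ (GDel G S).connectedComponentMk e1
    · obtain ⟨t, ht, u, au, huD, huE⟩ := hc2
      refine P3_dominates hfree (G := G) (x := ↑e1) (y := s) (z := ↑d1) (d := ↑u)
        he1.symm hd1 (comp_ne_nonadj (fun h => he1D (h.trans hd1D)))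
        (comp_ne_ne (fun h => he1D (h.trans hd1D)))
        (comp_ne_nonadj huE) ?_
        (comp_ne_nonadj (fun h => huD (h.trans hd1D)))
      intro h
      exact huE (hprop s hsS u e1 h.symm he1 huD he1D)
    push_neg at hc2
    have h2S : 1 < S.ncard := by omega
    obtain ⟨s₂, hs₂S, hs₂ne⟩ := Set.exists_ne_of_one_lt_ncard h2S s
    obtain ⟨e2, d2, he2, hd2, he2D, _⟩ := hed s₂ hs₂S
    have he2E : (GDel G S).connectedComponentMk e2 = (GDel G S).connectedComponentMk e1 :=
      hc2 s₂ hs₂S e2 he2 he2D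
    have haD : ∀ b : (Sᶜ : Set V), (GDel G S).connectedComponentMk b ≠ D → ¬ G.Adj a ↑b :=
      fun b hb h => comp_ne_nonadj hb h.symm
    by_cases hse : G.Adj s₂ ↑e1
    · exact P3_dominates hfree (G := G) (x := s) (y := ↑e1) (z := s₂) (d := a)
        he1 hse.symm (hA s hsA s₂ (hSsub hs₂S) (Ne.symm hs₂ne)) (Ne.symm hs₂ne)
        hnadj_as (haD e1 he1D) (fun h => hnadjSa s₂ hs₂S h.symm)
    · have hne12 : (↑e2 : V) ≠ ↑e1 := fun h => hse (by rw [← h]; exact he2)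
      exact P3_dominates hfree (G := G) (x := s₂) (y := ↑e2) (z := ↑e1) (d := a)
        he2 (adj_same e2 e1 he2E hne12) hse
        (fun h => e1.2 (h ▸ hs₂S))
        (fun h => hnadjSa s₂ hs₂S h.symm) (haD e2 (fun h => he1D (he2E ▸ h)))
        (haD e1 he1D)
  rcases claim ⟨a, haS⟩ haA with h | h
  · exact helper x₀ y₀ hx₀ hy₀ hxy₀ h claim
  · exact helper y₀ x₀ hy₀ hx₀ (Ne.symm hxy₀) h (fun b hb => Or.symm (claim b hb))
end C

/-- For a `(P₃ ∪ P₁)`-free connected noncomplete graph with `0 < τ(G) ≤ 1`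
and a tough set `S`, we have `w(G − S) = α(G)`. -/
theorem stmt_8 {V : Type*} [Fintype V] (G : SimpleGraph V)
    (hfree : IndFree (P3kP1 1) G) (hconn : G.Connected) (hnc : G ≠ ⊤)
    (h0 : 0 < toughness G) (h1 : toughness G ≤ 1)
    (S : Set V) (hS : IsCutset G S)
    (htight : (S.ncard : ℝ) / numComp G S = toughness G) :
    numComp G S = _root_.indepNum G := by
  classical
  set M := {n | ∃ T : Set V, T.ncard = n ∧ ∀ u ∈ T, ∀ v ∈ T, u ≠ v → ¬ G.Adj u v} with hM
  set rep : (GDel G S).ConnectedComponent → (Sᶜ : Set V) :=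
    fun C => (Quot.exists_rep C).choose with hrep
  have hrepeq : ∀ C, (GDel G S).connectedComponentMk (rep C) = C :=
    fun C => (Quot.exists_rep C).choose_spec
  have hinj : Function.Injective (fun C => (↑(rep C) : V)) := by
    intro C D h
    have h2 : rep C = rep D := Subtype.ext h
    rw [← hrepeq C, ← hrepeq D, h2]
  set T : Set V := (fun C => (↑(rep C) : V)) '' Set.univ with hT
  have hTcard : T.ncard = numComp G S := by
    rw [hT, Set.ncard_image_of_injective _ hinj, Set.ncard_univ]
    rfl
  have hTind : ∀ u ∈ T, ∀ v ∈ T, u ≠ v → ¬ G.Adj u v := by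
    rintro u ⟨C, -, rfl⟩ v ⟨D, -, rfl⟩ hne
    have hCD : (GDel G S).connectedComponentMk (rep C) ≠
        (GDel G S).connectedComponentMk (rep D) := by
      rw [hrepeq, hrepeq]
      exact fun h => hne (by rw [h])
    exact comp_ne_nonadj hCD
  have hmem : numComp G S ∈ M := ⟨T, hTcard, hTind⟩
  have hbdd : BddAbove M := by
    refine ⟨Fintype.card V, ?_⟩
    rintro n ⟨T', rfl, -⟩
    calc T'.ncard ≤ (Set.univ : Set V).ncard :=
          Set.ncard_le_ncard (Set.subset_univ _) (Set.toFinite _)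
      _ = Fintype.card V := by rw [Set.ncard_univ, Nat.card_eq_fintype_card]
  refine le_antisymm (le_csSup hbdd hmem) ?_
  refine csSup_le ⟨_, hmem⟩ ?_
  rintro n ⟨A, rfl, hA⟩
  exact indep_le_numComp hfree h0 h1 hS htight A hA
end

section
/- Let t > 0 and let G be a t-tough graph on n ≥ 3 vertices with a cycle C that is not Hamiltonian. If x ∈ V(G)∖V(C) has more than n/(t+1) − 1 neighbors on C, then G has a cycle C′ with V(C′) = V(C) ∪ {x}. -/
open SimpleGraph

variable {V : Type*} {α : Type*}

section Aux
open SimpleGraph Walk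

variable {G : SimpleGraph V}

lemma auxReachEq {W : Type*} {H : SimpleGraph W} (hno : ∀ u v : W, ¬ H.Adj u v)
    {a b : W} (h : H.Reachable a b) : a = b := by
  obtain ⟨p⟩ := h
  cases p with
  | nil => rfl
  | cons h' p => exact absurd h' (hno _ _)

lemma auxCardComp {W : Type*} (H : SimpleGraph W) (hno : ∀ u v : W, ¬ H.Adj u v) :
    Nat.card H.ConnectedComponent = Nat.card W := by
  refine (Nat.card_eq_of_bijective H.connectedComponentMk ⟨?_, ?_⟩).symm
  · intro a b hab
    exact auxReachEq hno (SimpleGraph.ConnectedComponent.exact hab)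
  · intro c
    exact c.ind (fun w => ⟨w, rfl⟩)

lemma auxCutset (G : SimpleGraph V) (S : Set V) {a b : V} (ha : a ∈ Sᶜ) (hb : b ∈ Sᶜ)
    (hab : a ≠ b) (hno : ∀ u v : V, u ∈ Sᶜ → v ∈ Sᶜ → ¬ G.Adj u v) : IsCutset G S := by
  intro hpre
  have h := hpre ⟨a, ha⟩ ⟨b, hb⟩
  have heq := auxReachEq (H := GDel G S) (fun u v huv => hno ↑u ↑v u.2 v.2 huv) h
  exact hab (congrArg Subtype.val heq)

lemma auxNumComp (G : SimpleGraph V) (S : Set V)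
    (hno : ∀ u v : V, u ∈ Sᶜ → v ∈ Sᶜ → ¬ G.Adj u v) :
    numComp G S = Nat.card (Sᶜ : Set V) :=
  auxCardComp (GDel G S) (fun u v h => hno ↑u ↑v u.2 v.2 h)

lemma auxMemRotate [DecidableEq V] {v u : V} (c : G.Walk v v) (h : u ∈ c.support) (z : V) :
    z ∈ (c.rotate u h).support ↔ z ∈ c.support := by
  have h1 : c.rotate u h = (c.dropUntil u h).append (c.takeUntil u h) := rfl
  rw [h1, mem_support_append_iff]
  conv_rhs => rw [← take_spec c h]
  rw [mem_support_append_iff]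
  tauto

lemma auxTailNe {v : V} {c : G.Walk v v} (hc : c.IsCycle) : c.support.tail ≠ [] := by
  have h3 := hc.three_le_length
  have hlen : c.support.length = c.length + 1 := c.length_support
  intro h
  have h2 : c.support.tail.length = c.length := by
    rw [List.length_tail, hlen]; omega
  rw [h] at h2
  simp at h2
  omega

lemma auxDropLast {v : V} {c : G.Walk v v} (hc : c.IsCycle) :
    c.support.dropLast = v :: c.support.tail.dropLast ∧ c.support.dropLast.Nodup ∧
      c.support.tail.dropLast ++ [v] = c.support.tail := by
  have hne := auxTailNe hc
  have hlast : c.support.tail.getLast hne = v := by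
    rw [List.getLast_tail]; exact c.getLast_support
  have htail : c.support.tail.dropLast ++ [v] = c.support.tail := by
    conv_rhs => rw [← List.dropLast_append_getLast hne]
    rw [hlast]
  have hnd : c.support.tail.Nodup := hc.support_nodup
  have hnd' : (c.support.tail.dropLast ++ [v]).Nodup := by rw [htail]; exact hnd
  have hd : c.support.dropLast = v :: c.support.tail.dropLast := by
    conv_lhs => rw [c.support_eq_cons, ← htail]
    rw [← List.cons_append, List.dropLast_concat]
  refine ⟨hd, ?_, htail⟩
  rw [hd, List.nodup_cons]
  rw [List.nodup_append] at hnd'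
  refine ⟨fun hv => ?_, hnd'.1⟩
  exact hnd'.2.2 v hv v (by simp) rfl

lemma auxDartFstUnique {v : V} {c : G.Walk v v} (hc : c.IsCycle)
    {d₁ d₂ : G.Dart} (h₁ : d₁ ∈ c.darts) (h₂ : d₂ ∈ c.darts) (hf : d₁.fst = d₂.fst) :
    d₁ = d₂ := by
  have hnd : (c.darts.map (·.fst)).Nodup := by
    rw [c.map_fst_darts]; exact (auxDropLast hc).2.1
  exact List.inj_on_of_nodup_map hnd h₁ h₂ hf

lemma auxDartSndUnique {v : V} {c : G.Walk v v} (hc : c.IsCycle)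
    {d₁ d₂ : G.Dart} (h₁ : d₁ ∈ c.darts) (h₂ : d₂ ∈ c.darts) (hf : d₁.snd = d₂.snd) :
    d₁ = d₂ := by
  have hnd : (c.darts.map (·.snd)).Nodup := by
    rw [c.map_snd_darts]; exact hc.support_nodup
  exact List.inj_on_of_nodup_map hnd h₁ h₂ hf

lemma auxExDart {v : V} {c : G.Walk v v} (hc : c.IsCycle) {z : V} (hz : z ∈ c.support) :
    ∃ d : G.Dart, d ∈ c.darts ∧ d.fst = z := by
  obtain ⟨hd, -, htail⟩ := auxDropLast hc
  have hmem : z ∈ c.support.dropLast := by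
    rw [hd]
    rw [c.support_eq_cons] at hz
    rcases List.mem_cons.mp hz with h | h
    · simp [h]
    · rw [← htail] at h
      rcases List.mem_append.mp h with h | h
      · exact List.mem_cons_of_mem _ h
      · simp at h; simp [h]
  rw [← c.map_fst_darts] at hmem
  obtain ⟨d, hd1, hd2⟩ := List.mem_map.mp hmem
  exact ⟨d, hd1, hd2⟩

end Aux

/-- A vertex off a cycle with many neighbors on the cycle can be inserted. -/
theorem stmt_11 {V : Type*} [Fintype V] (t : ℝ) (ht : 0 < t) (G : SimpleGraph V)
    (hn : 3 ≤ Fintype.card V) (htough : Tough t G)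
    (v : V) (C : G.Walk v v) (hC : C.IsCycle)
    (x : V) (hx : x ∉ C.support)
    (hdeg : (Fintype.card V : ℝ) / (t + 1) - 1 <
      (Nat.card {y : V | y ∈ C.support ∧ G.Adj x y} : ℝ)) :
    ∃ u : V, ∃ C' : G.Walk u u, C'.IsCycle ∧
      ∀ z : V, z ∈ C'.support ↔ (z ∈ C.support ∨ z = x) := by
  classical
  -- successor machinery
  have hex : ∀ z : V, ∃ d : G.Dart, z ∈ C.support → d ∈ C.darts ∧ d.fst = z := by
    intro z
    by_cases hz : z ∈ C.support
    · obtain ⟨d, h1, h2⟩ := auxExDart hC hz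
      exact ⟨d, fun _ => ⟨h1, h2⟩⟩
    · obtain ⟨d0, hd0⟩ := auxExDart hC (C.start_mem_support)
      exact ⟨d0, fun h => absurd h hz⟩
  choose f hf using hex
  set succ : V → V := fun z => (f z).snd with hsucc_def
  have hfd : ∀ z, z ∈ C.support → f z ∈ C.darts := fun z hz => (hf z hz).1
  have hffst : ∀ z, z ∈ C.support → (f z).fst = z := fun z hz => (hf z hz).2
  have hsadj : ∀ z, z ∈ C.support → G.Adj z (succ z) := by
    intro z hz
    have h := (f z).adj
    rwa [hffst z hz] at h
  have hsmem : ∀ z, z ∈ C.support → succ z ∈ C.support :=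
    fun z hz => C.dart_snd_mem_support_of_mem_darts (hfd z hz)
  have hsinj : ∀ y, y ∈ C.support → ∀ z, z ∈ C.support → succ y = succ z → y = z := by
    intro y hy z hz h
    have he := auxDartSndUnique hC (hfd y hy) (hfd z hz) h
    rw [← hffst y hy, ← hffst z hz, he]
  have hsnd_of_dart : ∀ d : G.Dart, d ∈ C.darts → d.snd = succ d.fst := by
    intro d hd
    have hm : d.fst ∈ C.support := C.dart_fst_mem_support_of_mem_darts hd
    have he := auxDartFstUnique hC hd (hfd d.fst hm) ((hffst d.fst hm).symm)
    exact congrArg (fun d => d.toProd.2) he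
  by_cases hA : ∃ p, ∃ _ : p ∈ C.support, G.Adj x p ∧ G.Adj x (succ p)
  · -- Case A : insert x between p and succ p
    obtain ⟨p, hp, hxp, hxsp⟩ := hA
    have hRcyc := hC.rotate hp
    obtain ⟨w, hadj, Q, hR⟩ := Walk.not_nil_iff.mp hRcyc.not_nil
    have hw : w = succ p := by
      have hdm : (⟨(p, w), hadj⟩ : G.Dart) ∈ (C.rotate p hp).darts := by
        rw [hR, Walk.darts_cons]; exact List.mem_cons_self
      have hdC : (⟨(p, w), hadj⟩ : G.Dart) ∈ C.darts :=
        ((C.rotate_darts p hp).perm.mem_iff).mp hdm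
      exact hsnd_of_dart _ hdC
    rw [hR] at hRcyc
    obtain ⟨hQpath, hQe⟩ := (Walk.cons_isCycle_iff Q hadj).mp hRcyc
    have hCsupp : ∀ z, z ∈ C.support ↔ (z = p ∨ z ∈ Q.support) := by
      intro z
      rw [← auxMemRotate C hp z, hR]
      simp [Walk.support_cons]
    have hxQ : x ∉ Q.support := fun h => hx ((hCsupp x).mpr (Or.inr h))
    have hxw : G.Adj x w := by rw [hw]; exact hxsp
    have hpx : G.Adj p x := hxp.symm
    have hpw : p ≠ w := hadj.ne
    refine ⟨x, Walk.cons hxw (Q.append (Walk.cons hpx Walk.nil)), ?_, ?_⟩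
    · rw [Walk.cons_isCycle_iff]
      constructor
      · apply Walk.IsPath.mk'
        rw [Walk.support_append]
        simp only [Walk.support_cons, Walk.support_nil, List.tail_cons]
        rw [List.nodup_append]
        refine ⟨hQpath.support_nodup, List.nodup_singleton x, ?_⟩
        intro a haQ b hax
        simp only [List.mem_singleton] at hax
        rintro rfl; exact hxQ (hax ▸ haQ)
      · rw [Walk.edges_append]
        simp only [Walk.edges_cons, Walk.edges_nil]
        intro hmem
        rcases List.mem_append.mp hmem with h | h
        · exact hxQ (Q.fst_mem_support_of_mem_edges h)
        · simp only [List.mem_singleton, Sym2.eq_iff] at h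
          rcases h with ⟨h1, h2⟩ | ⟨h1, h2⟩
          · exact hx (h1 ▸ hp)
          · exact hpw h2.symm
    · intro z
      rw [Walk.support_cons, Walk.support_append]
      simp only [Walk.support_cons, Walk.support_nil, List.tail_cons, List.mem_cons,
        List.mem_append, List.mem_singleton, List.not_mem_nil, or_false]
      rw [hCsupp z]
      have hpQ : z = p → z ∈ Q.support := fun h => h ▸ Q.end_mem_support
      tauto
  · by_cases hB : ∃ y, ∃ _ : y ∈ C.support, ∃ z, ∃ _ : z ∈ C.support,
        G.Adj x y ∧ G.Adj x z ∧ y ≠ z ∧ G.Adj (succ y) (succ z)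
    · -- Case B : crossing construction
      obtain ⟨y, hy, z, hz, hxy, hxz, hyz, hss⟩ := hB
      have hRcyc := hC.rotate hy
      obtain ⟨w, hadj, E, hR⟩ := Walk.not_nil_iff.mp hRcyc.not_nil
      have hw : w = succ y := by
        have hdm : (⟨(y, w), hadj⟩ : G.Dart) ∈ (C.rotate y hy).darts := by
          rw [hR, Walk.darts_cons]; exact List.mem_cons_self
        exact hsnd_of_dart _ (((C.rotate_darts y hy).perm.mem_iff).mp hdm)
      rw [hR] at hRcyc
      obtain ⟨hEpath, hEe⟩ := (Walk.cons_isCycle_iff E hadj).mp hRcyc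
      have hCsupp : ∀ a, a ∈ C.support ↔ (a = y ∨ a ∈ E.support) := by
        intro a
        rw [← auxMemRotate C hy a, hR]
        simp [Walk.support_cons]
      have hzE : z ∈ E.support := by
        rcases (hCsupp z).mp hz with h | h
        · exact absurd h.symm hyz
        · exact h
      set E₁ := E.takeUntil z hzE with hE₁def
      set E₂ := E.dropUntil z hzE with hE₂def
      have hspec : E₁.append E₂ = E := E.take_spec hzE
      have hE₂nn : ¬ E₂.Nil := Walk.not_nil_of_ne (Ne.symm hyz)
      obtain ⟨w₂, hadj₂, E₃, hE₂⟩ := Walk.not_nil_iff.mp hE₂nn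
      have hw₂ : w₂ = succ z := by
        have hdm : (⟨(z, w₂), hadj₂⟩ : G.Dart) ∈ C.darts := by
          apply ((C.rotate_darts y hy).perm.mem_iff).mp
          rw [hR, Walk.darts_cons]
          apply List.mem_cons_of_mem
          rw [← hspec, Walk.darts_append]
          apply List.mem_append_right
          rw [hE₂, Walk.darts_cons]
          exact List.mem_cons_self
        exact hsnd_of_dart _ hdm
      have hEsupp : E.support = E₁.support ++ E₃.support := by
        rw [← hspec, Walk.support_append, hE₂, Walk.support_cons, List.tail_cons]
      have hEnd : E.support.Nodup := hEpath.support_nodup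
      have hE1sub : ∀ a, a ∈ E₁.support → a ∈ C.support := by
        intro a ha
        exact (hCsupp a).mpr (Or.inr (by rw [hEsupp]; exact List.mem_append_left _ ha))
      have hE3sub : ∀ a, a ∈ E₃.support → a ∈ C.support := by
        intro a ha
        exact (hCsupp a).mpr (Or.inr (by rw [hEsupp]; exact List.mem_append_right _ ha))
      have hxE1 : x ∉ E₁.support := fun h => hx (hE1sub x h)
      have hxE3 : x ∉ E₃.support := fun h => hx (hE3sub x h)
      have hww2 : G.Adj w w₂ := by rw [hw, hw₂]; exact hss
      have hwC : w ∈ C.support := by rw [hw]; exact hsmem y hy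
      have hw2C : w₂ ∈ C.support := by rw [hw₂]; exact hsmem z hz
      set P : G.Walk z x := E₁.reverse.append (Walk.cons hww2
        (E₃.append (Walk.cons hxy.symm Walk.nil))) with hPdef
      have hPsupp : P.support = E₁.support.reverse ++ (E₃.support ++ [x]) := by
        rw [hPdef, Walk.support_append, Walk.support_reverse]
        congr 1
        rw [Walk.support_cons, List.tail_cons, Walk.support_append,
          Walk.support_cons, Walk.support_nil, List.tail_cons]
      have hPedges : P.edges = E₁.reverse.edges ++ (s(w, w₂) :: (E₃.edges ++ [s(y, x)])) := by
        rw [hPdef, Walk.edges_append, Walk.edges_cons, Walk.edges_append,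
          Walk.edges_cons, Walk.edges_nil]
      refine ⟨x, Walk.cons hxz P, ?_, ?_⟩
      case _ =>
        rw [Walk.cons_isCycle_iff]
        constructor
        · apply Walk.IsPath.mk'
          rw [hPsupp]
          rw [hEsupp, List.nodup_append] at hEnd
          obtain ⟨h1, h3, hdisj⟩ := hEnd
          rw [List.nodup_append, List.nodup_reverse, List.nodup_append]
          refine ⟨h1, ⟨h3, List.nodup_singleton x, ?_⟩, ?_⟩
          · intro a ha b hax
            simp only [List.mem_singleton] at hax
            rintro rfl; exact hxE3 (hax ▸ ha)
          · intro a ha b hamem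
            rw [List.mem_reverse] at ha
            rcases List.mem_append.mp hamem with h | h
            · exact hdisj a ha b h
            · simp only [List.mem_singleton] at h
              rintro rfl; exact hxE1 (h ▸ ha)
        · rw [hPedges]
          intro hmem
          rcases List.mem_append.mp hmem with h | h
          · rw [Walk.edges_reverse, List.mem_reverse] at h
            exact hxE1 (E₁.fst_mem_support_of_mem_edges h)
          · rcases List.mem_cons.mp h with h | h
            · rw [Sym2.eq_iff] at h
              rcases h with ⟨h1, h2⟩ | ⟨h1, h2⟩
              · exact hx (h1 ▸ hwC)
              · exact hx (h1 ▸ hw2C)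
            · rcases List.mem_append.mp h with h | h
              · exact hxE3 (E₃.fst_mem_support_of_mem_edges h)
              · simp only [List.mem_singleton, Sym2.eq_iff] at h
                rcases h with ⟨h1, h2⟩ | ⟨h1, h2⟩
                · exact hx (h1 ▸ hy)
                · exact hyz h2.symm
      case _ =>
        intro a
        rw [Walk.support_cons, hPsupp]
        simp only [List.mem_cons, List.mem_append, List.mem_reverse, List.mem_singleton,
          List.not_mem_nil, or_false]
        rw [hCsupp a]
        have hE : a ∈ E.support ↔ (a ∈ E₁.support ∨ a ∈ E₃.support) := by
          rw [hEsupp]; exact List.mem_append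
        have hyE3 : a = y → a ∈ E₃.support := fun h => h ▸ E₃.end_mem_support
        constructor
        · rintro (h | h | h | h)
          · exact Or.inr h
          · exact Or.inl (Or.inr (hE.mpr (Or.inl h)))
          · exact Or.inl (Or.inr (hE.mpr (Or.inr h)))
          · exact Or.inr h
        · rintro ((h | h) | h)
          · exact Or.inr (Or.inr (Or.inl (hyE3 h)))
          · rcases hE.mp h with h | h
            · exact Or.inr (Or.inl h)
            · exact Or.inr (Or.inr (Or.inl h))
          · exact Or.inl h
    · -- Case C : contradiction with toughness
      exfalso
      have hA' : ∀ p, p ∈ C.support → G.Adj x p → ¬ G.Adj x (succ p) := by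
        intro p hp h1 h2; exact hA ⟨p, hp, h1, h2⟩
      have hB' : ∀ y, y ∈ C.support → ∀ z, z ∈ C.support → G.Adj x y → G.Adj x z →
          y ≠ z → ¬ G.Adj (succ y) (succ z) := by
        intro y hy z hz h1 h2 h3 h4; exact hB ⟨y, hy, z, hz, h1, h2, h3, h4⟩
      obtain ⟨c0, hc0C, hc0n⟩ : ∃ c0, c0 ∈ C.support ∧ ¬ G.Adj x c0 := by
        by_cases h1 : G.Adj x v
        · exact ⟨succ v, hsmem v C.start_mem_support, hA' v C.start_mem_support h1⟩
        · exact ⟨v, C.start_mem_support, h1⟩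
      have hxc0 : x ≠ c0 := fun h => hx (h ▸ hc0C)
      set n := Fintype.card V with hn_def
      have hpair : ({x, c0} : Set V).ncard = 2 := Set.ncard_pair hxc0
      have hcompl : ({x, c0} : Set V)ᶜᶜ = ({x, c0} : Set V) := compl_compl _
      have hno₀ : ∀ u w : V, u ∈ ({x, c0} : Set V)ᶜᶜ → w ∈ ({x, c0} : Set V)ᶜᶜ →
          ¬ G.Adj u w := by
        rw [hcompl]
        intro u w hu hw hadj
        simp only [Set.mem_insert_iff, Set.mem_singleton_iff] at hu hw
        rcases hu with rfl | rfl <;> rcases hw with rfl | rfl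
        · exact hadj.ne rfl
        · exact hc0n hadj
        · exact hc0n hadj.symm
        · exact hadj.ne rfl
      have hcut₀ : IsCutset G ({x, c0} : Set V)ᶜ :=
        auxCutset G _ (a := x) (b := c0) (hcompl.symm ▸ Set.mem_insert x _)
          (hcompl.symm ▸ Set.mem_insert_of_mem _ rfl) hxc0 hno₀
      have hnum₀ : numComp G ({x, c0} : Set V)ᶜ = 2 := by
        rw [auxNumComp G _ hno₀, Nat.card_coe_set_eq, hcompl, hpair]
      have htough₀ := htough _ hcut₀
      rw [hnum₀] at htough₀
      have hsum₀ := Set.ncard_add_ncard_compl ({x, c0} : Set V)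
      rw [hpair, Nat.card_eq_fintype_card, ← hn_def] at hsum₀
      have h2n : 2 ≤ n := by omega
      have h2t : t * 2 ≤ (n : ℝ) - 2 := by
        have hc : ({x, c0} : Set V)ᶜ.ncard = n - 2 := by omega
        rw [hc, Nat.cast_sub h2n] at htough₀
        push_cast at htough₀
        linarith
      set Nset : Set V := {y : V | y ∈ C.support ∧ G.Adj x y} with hNdef
      have hdn : Nat.card ↥Nset = Nset.ncard := Nat.card_coe_set_eq Nset
      have ht1 : (0:ℝ) < t + 1 := by linarith
      have hd2 : 2 ≤ Nat.card ↥Nset := by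
        have h1 : (2:ℝ) ≤ (n:ℝ) / (t+1) := by
          rw [le_div_iff₀ ht1]; linarith
        have h2 : (1:ℝ) < (Nat.card ↥Nset : ℝ) := by
          calc (1:ℝ) ≤ (n:ℝ) / (t+1) - 1 := by linarith
          _ < _ := hdeg
        have := Nat.one_lt_cast.mp h2
        omega
      have hNne : ∃ y0, y0 ∈ Nset := by
        rcases Set.eq_empty_or_nonempty Nset with h | h
        · rw [hdn, h] at hd2; simp at hd2
        · exact h
      set T : Set V := insert x (succ '' Nset) with hTdef
      have himsub : ∀ a ∈ succ '' Nset, a ∈ C.support := by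
        rintro a ⟨b, hb, rfl⟩; exact hsmem b hb.1
      have hxim : x ∉ succ '' Nset := fun h => hx (himsub x h)
      have hinj : Set.InjOn succ Nset := fun a ha b hb hab => hsinj a ha.1 b hb.1 hab
      have hTcard : T.ncard = Nat.card ↥Nset + 1 := by
        rw [hTdef, Set.ncard_insert_of_notMem hxim, Set.ncard_image_of_injOn hinj, hdn]
      have hTind : ∀ u w : V, u ∈ T → w ∈ T → ¬ G.Adj u w := by
        intro u w hu hw hadj
        rw [hTdef] at hu hw
        simp only [Set.mem_insert_iff] at hu hw
        rcases hu with rfl | ⟨a, ha, rfl⟩ <;> rcases hw with rfl | ⟨b, hb, rfl⟩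
        · exact hadj.ne rfl
        · exact hA' b hb.1 hb.2 hadj
        · exact hA' a ha.1 ha.2 hadj.symm
        · by_cases hab : a = b
          · exact hadj.ne (by rw [hab])
          · exact hB' a ha.1 b hb.1 ha.2 hb.2 hab hadj
      have hTc : Tᶜᶜ = T := compl_compl T
      have hnoT : ∀ u w : V, u ∈ Tᶜᶜ → w ∈ Tᶜᶜ → ¬ G.Adj u w := by
        rw [hTc]; exact hTind
      obtain ⟨y0, hy0⟩ := hNne
      have hy0T : succ y0 ∈ T := by
        rw [hTdef]; exact Set.mem_insert_of_mem _ ⟨y0, hy0, rfl⟩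
      have hxT : x ∈ T := by rw [hTdef]; exact Set.mem_insert _ _
      have hxsy0 : x ≠ succ y0 := fun h => hx (h ▸ hsmem y0 hy0.1)
      have hcut : IsCutset G Tᶜ :=
        auxCutset G Tᶜ (hTc.symm ▸ hxT) (hTc.symm ▸ hy0T) hxsy0 hnoT
      have hnum : numComp G Tᶜ = Nat.card ↥Nset + 1 := by
        rw [auxNumComp G Tᶜ hnoT, Nat.card_coe_set_eq, hTc, hTcard]
      have hsum := Set.ncard_add_ncard_compl T
      rw [Nat.card_eq_fintype_card, ← hn_def, hTcard] at hsum
      have htoughT := htough Tᶜ hcut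
      rw [hnum] at htoughT
      set D := Nat.card ↥Nset with hDdef
      have hc1 : ((Tᶜ.ncard : ℕ) : ℝ) = (n : ℝ) - (D + 1) := by
        have h1 : Tᶜ.ncard = n - (D + 1) := by omega
        have h2 : D + 1 ≤ n := by omega
        rw [h1, Nat.cast_sub h2]
        push_cast
        ring
      rw [hc1] at htoughT
      push_cast at htoughT
      have hlt : (n:ℝ) < (t + 1) * ((D:ℝ) + 1) := by
        have h3 : (n:ℝ)/(t+1) < (D:ℝ) + 1 := by linarith
        have := (div_lt_iff₀ ht1).mp h3
        linarith [this]
      nlinarith [htoughT, hlt]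
end

section
/- Let G be a k-connected graph on at least 3 vertices. If κ(G) ≥ α(G) − 1, then G has a Hamiltonian path. -/
open SimpleGraph

variable {V : Type*} {α : Type*}

section Helpers

set_option linter.unusedSectionVars false

variable {V : Type*} [DecidableEq V] {G : SimpleGraph V}

private lemma ce_next_unique {α : Type*} [DecidableEq α] {L a a' b b' : List α} {x s s' : α}
    (hL : L.Nodup) (h1 : L = a ++ x :: s :: b) (h2 : L = a' ++ x :: s' :: b') : s = s' := by
  have hx1 : x ∉ a := by
    intro hmem
    rw [h1] at hL
    exact (List.disjoint_of_nodup_append hL) hmem (by simp)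
  have hx2 : x ∉ a' := by
    intro hmem
    rw [h2] at hL
    exact (List.disjoint_of_nodup_append hL) hmem (by simp)
  have e1 : L.idxOf x = a.length := by
    rw [h1, List.idxOf_append_of_notMem hx1, List.idxOf_cons_self]; omega
  have e2 : L.idxOf x = a'.length := by
    rw [h2, List.idxOf_append_of_notMem hx2, List.idxOf_cons_self]; omega
  have h3 : x :: s :: b = x :: s' :: b' :=
    List.append_inj_right (h1.symm.trans h2) (by omega)
  exact ((List.cons.injEq _ _ _ _).mp h3).2 |> fun h => ((List.cons.injEq _ _ _ _).mp h).1

private lemma ce_order {α : Type*} [DecidableEq α] {L d1 d2 r1 r2 : List α} {x1 x2 : α}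
    (hL : L.Nodup) (h1 : L = d1 ++ x1 :: r1) (h2 : L = d2 ++ x2 :: r2) (hne : x1 ≠ x2) :
    x2 ∈ r1 ∨ x1 ∈ r2 := by
  have hnd1 : x1 ∉ d1 := by
    intro hmem; rw [h1] at hL
    exact (List.disjoint_of_nodup_append hL) hmem (by simp)
  have hnd2 : x2 ∉ d2 := by
    intro hmem; rw [h2] at hL
    exact (List.disjoint_of_nodup_append hL) hmem (by simp)
  have e1 : L.idxOf x1 = d1.length := by
    rw [h1, List.idxOf_append_of_notMem hnd1, List.idxOf_cons_self]; omega
  have e2 : L.idxOf x2 = d2.length := by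
    rw [h2, List.idxOf_append_of_notMem hnd2, List.idxOf_cons_self]; omega
  by_contra hcon
  push_neg at hcon
  obtain ⟨hc1, hc2⟩ := hcon
  have hm2 : x2 ∈ d1 := by
    have : x2 ∈ L := by rw [h2]; simp
    rw [h1] at this
    simp only [List.mem_append, List.mem_cons] at this
    rcases this with h | h | h
    · exact h
    · exact absurd h.symm hne
    · exact absurd h hc1
  have hm1 : x1 ∈ d2 := by
    have : x1 ∈ L := by rw [h1]; simp
    rw [h2] at this
    simp only [List.mem_append, List.mem_cons] at this
    rcases this with h | h | h
    · exact h
    · exact absurd h hne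
    · exact absurd h hc2
  have l1 : L.idxOf x2 < d1.length := by
    rw [h1, List.idxOf_append_of_mem hm2]
    exact List.idxOf_lt_length_iff.2 hm2
  have l2 : L.idxOf x1 < d2.length := by
    rw [h2, List.idxOf_append_of_mem hm1]
    exact List.idxOf_lt_length_iff.2 hm1
  omega

private lemma ce_shape {u x s v : V} (E : G.Walk u x) (h : G.Adj x s) (F : G.Walk s v) :
    (E.append (Walk.cons h F)).support = E.support.dropLast ++ x :: F.support := by
  rw [Walk.support_append, Walk.support_cons, List.tail_cons]
  conv_lhs => rw [← List.dropLast_append_getLast (l := E.support) (by simp)]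
  rw [E.getLast_support, List.append_assoc, List.singleton_append]

private lemma ce_exists_longest (G : SimpleGraph V) [Fintype V] [Nonempty V] :
    ∃ (u v : V) (p : G.Walk u v), p.IsPath ∧
      ∀ (a b : V) (q : G.Walk a b), q.IsPath → q.length ≤ p.length := by
  classical
  set Lset : Set ℕ := {n | ∃ (a b : V) (q : G.Walk a b), q.IsPath ∧ q.length = n} with hLset
  have hne : Lset.Nonempty := ⟨0, Classical.arbitrary V, Classical.arbitrary V, Walk.nil,
    Walk.IsPath.nil, rfl⟩
  have hbdd : BddAbove Lset := by
    refine ⟨Fintype.card V, ?_⟩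
    rintro n ⟨a, b, q, hq, rfl⟩
    exact hq.length_lt.le
  obtain ⟨a, b, q, hq, hl⟩ := Nat.sSup_mem hne hbdd
  exact ⟨a, b, q, hq, fun a' b' q' hq' => hl ▸ le_csSup hbdd ⟨a', b', q', hq', rfl⟩⟩

private lemma ce_pathB {u x s v z : V} (E : G.Walk u x) (hus : G.Adj u s)
    (F : G.Walk s v) (hzx : G.Adj z x)
    (hnodup : (E.support ++ F.support).Nodup)
    (hzE : z ∉ E.support) (hzF : z ∉ F.support) :
    ∃ (a b : V) (q : G.Walk a b), q.IsPath ∧ q.length = E.length + F.length + 2 := by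
  obtain ⟨h1, h2, h3⟩ := List.nodup_append'.mp hnodup
  refine ⟨z, v, Walk.cons hzx (E.reverse.append (Walk.cons hus F)), ?_, ?_⟩
  · rw [Walk.isPath_def, Walk.support_cons, Walk.support_append, Walk.support_reverse,
      Walk.support_cons, List.tail_cons, List.nodup_cons]
    refine ⟨by simp [hzE, hzF], List.nodup_append'.mpr ⟨by simpa using h1, h2, ?_⟩⟩
    intro a ha hb
    exact h3 (List.mem_reverse.mp ha) hb
  · simp only [Walk.length_cons, Walk.length_append, Walk.length_reverse]
    omega

private lemma ce_pathC {u x z y' s v : V} (E : G.Walk u x) (hxz : G.Adj x z)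
    (R : G.Walk z y') (hys : G.Adj y' s) (F : G.Walk s v)
    (hnodup : (E.support ++ F.support).Nodup) (hR : R.support.Nodup)
    (hRE : ∀ a ∈ R.support, a ∉ E.support) (hRF : ∀ a ∈ R.support, a ∉ F.support) :
    ∃ (a b : V) (q : G.Walk a b), q.IsPath ∧
      q.length = E.length + R.length + F.length + 2 := by
  obtain ⟨h1, h2, h3⟩ := List.nodup_append'.mp hnodup
  refine ⟨u, v, E.append (Walk.cons hxz (R.append (Walk.cons hys F))), ?_, ?_⟩
  · rw [Walk.isPath_def, Walk.support_append, Walk.support_cons, List.tail_cons,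
      Walk.support_append, Walk.support_cons, List.tail_cons]
    refine List.nodup_append'.mpr ⟨h1, List.nodup_append'.mpr ⟨hR, h2, ?_⟩, ?_⟩
    · exact fun a ha hb => hRF a ha hb
    · intro a ha hb
      rcases List.mem_append.mp hb with hb | hb
      · exact hRE a hb ha
      · exact h3 ha hb
  · simp only [Walk.length_append, Walk.length_cons]
    omega

private lemma ce_pathD {u x1 z1 z2 x2 s1 s2 v : V} (E : G.Walk u x1) (hx1z1 : G.Adj x1 z1)
    (R : G.Walk z1 z2) (hz2x2 : G.Adj z2 x2) (B : G.Walk s1 x2) (hadj : G.Adj s1 s2)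
    (C : G.Walk s2 v)
    (hnodup : (E.support ++ (B.support ++ C.support)).Nodup) (hRnd : R.support.Nodup)
    (hRd : ∀ a ∈ R.support, a ∉ E.support ∧ a ∉ B.support ∧ a ∉ C.support) :
    ∃ (a b : V) (q : G.Walk a b), q.IsPath ∧
      q.length = E.length + R.length + B.length + C.length + 3 := by
  obtain ⟨h1, hrest, hd1⟩ := List.nodup_append'.mp hnodup
  obtain ⟨h2, h3, hd2⟩ := List.nodup_append'.mp hrest
  refine ⟨u, v, E.append (Walk.cons hx1z1 (R.append (Walk.cons hz2x2
    (B.reverse.append (Walk.cons hadj C))))), ?_, ?_⟩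
  · rw [Walk.isPath_def, Walk.support_append, Walk.support_cons, List.tail_cons,
      Walk.support_append, Walk.support_cons, List.tail_cons, Walk.support_append,
      Walk.support_reverse, Walk.support_cons, List.tail_cons]
    refine List.nodup_append'.mpr ⟨h1, ?_, ?_⟩
    · refine List.nodup_append'.mpr ⟨hRnd, List.nodup_append'.mpr
        ⟨by simpa using h2, h3, fun a ha hb => hd2 (List.mem_reverse.mp ha) hb⟩, ?_⟩
      intro a ha hb
      rcases List.mem_append.mp hb with hb | hb
      · exact (hRd a ha).2.1 (List.mem_reverse.mp hb)
      · exact (hRd a ha).2.2 hb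
    · intro a ha hb
      rcases List.mem_append.mp hb with hb | hb
      · exact (hRd a hb).1 ha
      · rcases List.mem_append.mp hb with hb | hb
        · exact hd1 ha (List.mem_append_left _ (List.mem_reverse.mp hb))
        · exact hd1 ha (List.mem_append_right _ hb)
  · simp only [Walk.length_append, Walk.length_cons, Walk.length_reverse]
    omega

end Helpers

section Machinery
set_option linter.unusedSectionVars false

variable {V : Type*} [DecidableEq V] {G : SimpleGraph V} {u v x y : V}

private def Nxt (G : SimpleGraph V) {u v : V} (p : G.Walk u v) (x s : V) : Prop :=
  ∃ (E : G.Walk u x) (hadj : G.Adj x s) (F : G.Walk s v), p = E.append (Walk.cons hadj F)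

open Classical in
private noncomputable def sucF (G : SimpleGraph V) {u v : V} (p : G.Walk u v) (x : V) : V :=
  if h : ∃ s, Nxt G p x s then h.choose else x

private lemma nxt_exists {p : G.Walk u v} (hx : x ∈ p.support) (hxv : x ≠ v) :
    ∃ s, Nxt G p x s := by
  obtain ⟨s, hadj, F, hD⟩ := Walk.exists_eq_cons_of_ne hxv (p.dropUntil x hx)
  exact ⟨s, p.takeUntil x hx, hadj, F, by rw [← hD, Walk.take_spec]⟩

private lemma nxt_support_eq {p : G.Walk u v} {x s : V} (h : Nxt G p x s) :
    ∃ E F : List V, p.support = E ++ x :: s :: F := by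
  obtain ⟨E, hadj, F, rfl⟩ := h
  exact ⟨E.support.dropLast, F.support.tail, by
    rw [ce_shape]
    conv_lhs => rw [F.support_eq_cons]⟩

private lemma nxt_unique {p : G.Walk u v} (hp : p.IsPath) {x s : V} (h : Nxt G p x s) :
    sucF G p x = s := by
  have hex : ∃ s, Nxt G p x s := ⟨s, h⟩
  rw [sucF, dif_pos hex]
  obtain ⟨E, F, hEF⟩ := nxt_support_eq hex.choose_spec
  obtain ⟨E', F', hEF'⟩ := nxt_support_eq h
  exact ce_next_unique hp.support_nodup hEF hEF'

private def HyS (G : SimpleGraph V) {u v : V} (p : G.Walk u v) (y : V) : Set V :=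
  {z | ∃ w : G.Walk y z, ∀ a ∈ w.support, a ∉ p.support}

private def TS (G : SimpleGraph V) {u v : V} (p : G.Walk u v) (y : V) : Set V :=
  {x | x ∈ p.support ∧ ∃ z ∈ HyS G p y, G.Adj x z}

private lemma hyS_off {p : G.Walk u v} {z : V} (h : z ∈ HyS G p y) : z ∉ p.support := by
  obtain ⟨w, hw⟩ := h
  exact hw z w.end_mem_support

private lemma hyS_ext {p : G.Walk u v} {z w : V} (h : z ∈ HyS G p y) (hadj : G.Adj z w)
    (hw : w ∉ p.support) : w ∈ HyS G p y := by
  obtain ⟨wz, hwz⟩ := h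
  refine ⟨wz.append (Walk.cons hadj Walk.nil), ?_⟩
  intro a ha
  rw [Walk.mem_support_append_iff] at ha
  rcases ha with h | h
  · exact hwz a h
  · simp only [Walk.support_cons, Walk.support_nil, List.mem_cons,
      List.mem_singleton, List.not_mem_nil, or_false] at h
    rcases h with rfl | rfl
    · exact hwz a wz.end_mem_support
    · exact hw

private lemma hyS_conn {p : G.Walk u v} {z1 z2 : V} (h1 : z1 ∈ HyS G p y)
    (h2 : z2 ∈ HyS G p y) :
    ∃ r : G.Walk z1 z2, r.IsPath ∧ ∀ a ∈ r.support, a ∉ p.support := by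
  obtain ⟨w1, hw1⟩ := h1
  obtain ⟨w2, hw2⟩ := h2
  refine ⟨(w1.reverse.append w2).bypass, Walk.bypass_isPath _, fun a ha => ?_⟩
  have hmem := Walk.support_bypass_subset _ ha
  rw [Walk.mem_support_append_iff] at hmem
  rcases hmem with h | h
  · exact hw1 a (by rwa [Walk.support_reverse, List.mem_reverse] at h)
  · exact hw2 a h

end Machinery

/-- Chvátal–Erdős: if `κ(G) ≥ α(G) − 1` then `G` has a hamiltonian path. -/
theorem stmt_14 {V : Type*} [Fintype V] [DecidableEq V] (G : SimpleGraph V)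
    (hn : 3 ≤ Fintype.card V) (h : _root_.indepNum G ≤ kappa G + 1) :
    ∃ u v : V, ∃ p : G.Walk u v, p.IsHamiltonian := by
  classical
  haveI hne : Nonempty V := Fintype.card_pos_iff.mp (by omega)
  obtain ⟨u, v, p, hp, hmax⟩ := ce_exists_longest G
  by_cases hall : ∀ x : V, x ∈ p.support
  · exact ⟨u, v, p, fun a => List.count_eq_one_of_mem hp.support_nodup (hall a)⟩
  exfalso
  push_neg at hall
  obtain ⟨y, hy⟩ := hall
  have hyHy : y ∈ HyS G p y := ⟨Walk.nil, by simpa using hy⟩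
  -- non-extendability of the maximal path
  have hext_u : ∀ z, z ∉ p.support → ¬ G.Adj u z := by
    intro z hz hadj
    have hq : (Walk.cons hadj.symm p).IsPath := hp.cons hz
    have hle := hmax _ _ _ hq
    rw [Walk.length_cons] at hle
    omega
  have hext_v : ∀ z, z ∉ p.support → ¬ G.Adj v z := by
    intro z hz hadj
    have hq : (Walk.cons hadj.symm p.reverse).IsPath :=
      hp.reverse.cons (by rwa [Walk.support_reverse, List.mem_reverse])
    have hle := hmax _ _ _ hq
    rw [Walk.length_cons, Walk.length_reverse] at hle
    omega
  have huT : u ∉ TS G p y := by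
    rintro ⟨hsup, z, hz, hadj⟩
    exact hext_u z (hyS_off hz) hadj
  have hvT : v ∉ TS G p y := by
    rintro ⟨hsup, z, hz, hadj⟩
    exact hext_v z (hyS_off hz) hadj
  have hyT : y ∉ TS G p y := by
    rintro ⟨hsup, -⟩
    exact hy hsup
  -- T is a cutset
  have hcut : IsCutset G (TS G p y) := by
    intro hpre
    have hclaim : ∀ (c d : ((TS G p y)ᶜ : Set V)) (W : (GDel G (TS G p y)).Walk c d),
        (c : V) ∈ HyS G p y → (d : V) ∈ HyS G p y := by
      intro c d W
      induction W with
      | nil => exact id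
      | @cons a b d hab W ih =>
        intro hc
        refine ih ?_
        have hadj : G.Adj (a : V) (b : V) := hab
        by_cases hb : (b : V) ∈ p.support
        · exact absurd (⟨hb, ⟨(a : V), hc, hadj.symm⟩⟩ : (b : V) ∈ TS G p y) b.2
        · exact hyS_ext hc hadj hb
    obtain ⟨W⟩ := hpre ⟨y, hyT⟩ ⟨u, huT⟩
    exact hyS_off (hclaim _ _ W hyHy) p.start_mem_support
  have hkap : kappa G ≤ (TS G p y).ncard := by
    have hex : ∃ S : Set V, IsCutset G S := ⟨_, hcut⟩
    rw [kappa, if_pos hex]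
    exact Nat.sInf_le ⟨_, rfl, hcut⟩
  -- successors
  have hTv : ∀ x ∈ TS G p y, x ∈ p.support ∧ x ≠ v ∧ x ≠ u := by
    rintro x ⟨hsup, z, hz, hadj⟩
    refine ⟨hsup, ?_, ?_⟩
    · rintro rfl; exact hext_v z (hyS_off hz) hadj
    · rintro rfl; exact hext_u z (hyS_off hz) hadj
  have hsdec : ∀ x ∈ TS G p y, ∃ s, sucF G p x = s ∧ Nxt G p x s := by
    intro x hx
    obtain ⟨hsup, hxv, -⟩ := hTv x hx
    obtain ⟨s, hN⟩ := nxt_exists hsup hxv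
    exact ⟨s, nxt_unique hp hN, hN⟩
  have hsupp_eq : ∀ {x s : V} (E : G.Walk u x) (hadj : G.Adj x s) (F : G.Walk s v),
      p = E.append (Walk.cons hadj F) → p.support = E.support ++ F.support := by
    intro x s E hadj F hPeq
    rw [hPeq, Walk.support_append, Walk.support_cons, List.tail_cons]
  have hlen_eq : ∀ {x s : V} (E : G.Walk u x) (hadj : G.Adj x s) (F : G.Walk s v),
      p = E.append (Walk.cons hadj F) → p.length = E.length + F.length + 1 := by
    intro x s E hadj F hPeq
    rw [hPeq, Walk.length_append, Walk.length_cons]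
    omega
  have hsuc_mem : ∀ x ∈ TS G p y, sucF G p x ∈ p.support ∧ u ≠ sucF G p x := by
    intro x hx
    obtain ⟨s, hs, E, hadj, F, hPeq⟩ := hsdec x hx
    have hsupp := hsupp_eq E hadj F hPeq
    rw [hs]
    constructor
    · rw [hsupp]
      exact List.mem_append_right _ F.start_mem_support
    · have hnd := hp.support_nodup
      rw [hsupp] at hnd
      intro heq
      exact (List.disjoint_of_nodup_append hnd) E.start_mem_support
        (heq ▸ F.start_mem_support)
  -- pairwise non-adjacency facts
  have f2 : ∀ x ∈ TS G p y, ¬ G.Adj u (sucF G p x) := by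
    intro x hx hus
    obtain ⟨hsup, z, hz, hxz⟩ := id hx
    obtain ⟨s, hs, E, hadj, F, hPeq⟩ := hsdec x hx
    rw [hs] at hus
    have hsupp := hsupp_eq E hadj F hPeq
    have hznot := hyS_off hz
    rw [hsupp, List.mem_append] at hznot
    push_neg at hznot
    have hnd : (E.support ++ F.support).Nodup := by
      rw [← hsupp]; exact hp.support_nodup
    obtain ⟨a, b, q, hq, hql⟩ := ce_pathB E hus F hxz.symm hnd hznot.1 hznot.2
    have hle := hmax a b q hq
    have hpl := hlen_eq E hadj F hPeq
    omega
  have f3 : ∀ x ∈ TS G p y, ¬ G.Adj y (sucF G p x) := by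
    intro x hx hys
    obtain ⟨hsup, z, hz, hxz⟩ := id hx
    obtain ⟨s, hs, E, hadj, F, hPeq⟩ := hsdec x hx
    rw [hs] at hys
    have hsupp := hsupp_eq E hadj F hPeq
    have hnd : (E.support ++ F.support).Nodup := by
      rw [← hsupp]; exact hp.support_nodup
    obtain ⟨R, hR, hRoff⟩ := hyS_conn hz hyHy
    obtain ⟨a, b, q, hq, hql⟩ := ce_pathC E hxz R hys F hnd hR.support_nodup
      (fun a ha hb => hRoff a ha (by rw [hsupp]; exact List.mem_append_left _ hb))
      (fun a ha hb => hRoff a ha (by rw [hsupp]; exact List.mem_append_right _ hb))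
    have hle := hmax a b q hq
    have hpl := hlen_eq E hadj F hPeq
    omega
  have hDDord : ∀ x1 ∈ TS G p y, ∀ x2 ∈ TS G p y, x1 ≠ x2 →
      ∀ (s1 : V), sucF G p x1 = s1 →
      ∀ (E1 : G.Walk u x1) (hadj1 : G.Adj x1 s1) (F1 : G.Walk s1 v),
        p = E1.append (Walk.cons hadj1 F1) → x2 ∈ F1.support →
        (sucF G p x1 ≠ sucF G p x2) ∧ ¬ G.Adj (sucF G p x1) (sucF G p x2) := by
    intro x1 hx1 x2 hx2 hne12 s1 hs1 E1 hadj1 F1 hPeq1 hmem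
    obtain ⟨-, z1, hz1, hx1z1⟩ := id hx1
    obtain ⟨-, z2, hz2, hx2z2⟩ := id hx2
    have hx2v : x2 ≠ v := (hTv x2 hx2).2.1
    obtain ⟨s2, B, hadj2, C', hF1⟩ := nxt_exists (p := F1) hmem hx2v
    have hN2 : Nxt G p x2 s2 := ⟨E1.append (Walk.cons hadj1 B), hadj2, C', by
      rw [hPeq1, hF1, ← Walk.append_assoc, Walk.cons_append]⟩
    have hs2 : sucF G p x2 = s2 := nxt_unique hp hN2
    rw [hs1, hs2]
    have hsupp : p.support = E1.support ++ (B.support ++ C'.support) := by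
      rw [hsupp_eq E1 hadj1 F1 hPeq1, hF1, Walk.support_append, Walk.support_cons,
        List.tail_cons]
    have hnd : (E1.support ++ (B.support ++ C'.support)).Nodup := by
      rw [← hsupp]; exact hp.support_nodup
    constructor
    · intro heq
      have hndF : (B.support ++ C'.support).Nodup := (List.nodup_append.mp hnd).2.1
      exact (List.disjoint_of_nodup_append hndF) B.start_mem_support
        (heq ▸ C'.start_mem_support)
    · intro hadj12
      obtain ⟨R, hR, hRoff⟩ := hyS_conn hz1 hz2
      obtain ⟨a, b, q, hq, hql⟩ := ce_pathD E1 hx1z1 R hx2z2.symm B hadj12 C' hnd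
        hR.support_nodup
        (fun a ha => by
          have hoff := hRoff a ha
          rw [hsupp] at hoff
          simp only [List.mem_append, not_or] at hoff
          exact ⟨hoff.1, hoff.2.1, hoff.2.2⟩)
      have hle := hmax a b q hq
      have hpl : p.length = E1.length + B.length + C'.length + 2 := by
        rw [hlen_eq E1 hadj1 F1 hPeq1, hF1, Walk.length_append, Walk.length_cons]
        omega
      omega
  have hord : ∀ x1 ∈ TS G p y, ∀ x2 ∈ TS G p y, x1 ≠ x2 →
      ((sucF G p x1 ≠ sucF G p x2) ∧ ¬ G.Adj (sucF G p x1) (sucF G p x2)) ∨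
      ((sucF G p x2 ≠ sucF G p x1) ∧ ¬ G.Adj (sucF G p x2) (sucF G p x1)) := by
    intro x1 hx1 x2 hx2 hne12
    obtain ⟨s1, hs1, E1, hadj1, F1, hPeq1⟩ := hsdec x1 hx1
    obtain ⟨s2, hs2, E2, hadj2, F2, hPeq2⟩ := hsdec x2 hx2
    have horder := ce_order (L := p.support) hp.support_nodup
      (by rw [hPeq1, ce_shape]) (by rw [hPeq2, ce_shape]) hne12
    rcases horder with hmem | hmem
    · exact Or.inl (hDDord x1 hx1 x2 hx2 hne12 s1 hs1 E1 hadj1 F1 hPeq1 hmem)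
    · exact Or.inr (hDDord x2 hx2 x1 hx1 hne12.symm s2 hs2 E2 hadj2 F2 hPeq2 hmem)
  have hinj : Set.InjOn (sucF G p) (TS G p y) := by
    intro x1 hx1 x2 hx2 heq
    by_contra hne12
    rcases hord x1 hx1 x2 hx2 hne12 with ⟨hne, -⟩ | ⟨hne, -⟩
    · exact hne heq
    · exact hne heq.symm
  have hDD : ∀ x1 ∈ TS G p y, ∀ x2 ∈ TS G p y, x1 ≠ x2 →
      ¬ G.Adj (sucF G p x1) (sucF G p x2) := by
    intro x1 hx1 x2 hx2 hne12 hadj12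
    rcases hord x1 hx1 x2 hx2 hne12 with ⟨-, hna⟩ | ⟨-, hna⟩
    · exact hna hadj12
    · exact hna hadj12.symm
  -- the independent set
  have hyimg : y ∉ sucF G p '' TS G p y := by
    rintro ⟨x, hx, heq⟩
    exact hy (heq ▸ (hsuc_mem x hx).1)
  have huA : u ∉ insert y (sucF G p '' TS G p y) := by
    simp only [Set.mem_insert_iff, Set.mem_image, not_or, not_exists]
    constructor
    · rintro rfl; exact hy p.start_mem_support
    · rintro x ⟨hx, heq⟩
      exact (hsuc_mem x hx).2 heq.symm
  have hAcard : (insert u (insert y (sucF G p '' TS G p y))).ncard = (TS G p y).ncard + 2 := by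
    rw [Set.ncard_insert_of_notMem huA (Set.toFinite _),
      Set.ncard_insert_of_notMem hyimg (Set.toFinite _), Set.ncard_image_of_injOn hinj]
  have hAind : ∀ a ∈ insert u (insert y (sucF G p '' TS G p y)),
      ∀ b ∈ insert u (insert y (sucF G p '' TS G p y)), a ≠ b → ¬ G.Adj a b := by
    have hyu : ¬ G.Adj u y := hext_u y hy
    intro a ha b hb hab hGab
    simp only [Set.mem_insert_iff, Set.mem_image] at ha hb
    rcases ha with rfl | rfl | ⟨x1, hx1, rfl⟩ <;> rcases hb with rfl | rfl | ⟨x2, hx2, rfl⟩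
    · exact hab rfl
    · exact hyu hGab
    · exact f2 x2 hx2 hGab
    · exact hyu hGab.symm
    · exact hab rfl
    · exact f3 x2 hx2 hGab
    · exact f2 x1 hx1 hGab.symm
    · exact f3 x1 hx1 hGab.symm
    · exact hDD x1 hx1 x2 hx2 (fun hx => hab (by rw [hx])) hGab
  have hle : (insert u (insert y (sucF G p '' TS G p y))).ncard ≤ _root_.indepNum G := by
    apply le_csSup
    · refine ⟨Fintype.card V, ?_⟩
      rintro n ⟨T, rfl, -⟩
      calc T.ncard ≤ (Set.univ : Set V).ncard :=
            Set.ncard_le_ncard (Set.subset_univ T) Set.finite_univ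
        _ = Fintype.card V := by rw [Set.ncard_univ, Nat.card_eq_fintype_card]
    · exact ⟨_, rfl, hAind⟩
  rw [hAcard] at hle
  omega
end

section
/- Let G be a graph on at least 3 vertices with κ(G) ≥ α(G). Then G is Hamiltonian. -/
open SimpleGraph

variable {V : Type*} {α : Type*}

section ChvatalErdosAux

open SimpleGraph.Walk

variable {W : Type*} [DecidableEq W] {G : SimpleGraph W}

lemma isPath_append' {a b c : W} {p : G.Walk a b} {q : G.Walk b c}
    (hp : p.IsPath) (hq : q.IsPath) (hj : ∀ x ∈ p.support, x ∈ q.support → x = b) :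
    (p.append q).IsPath := by
  refine IsPath.mk' ?_
  rw [Walk.support_append, List.nodup_append']
  refine ⟨hp.support_nodup, hq.support_nodup.sublist (List.tail_sublist _), ?_⟩
  intro x hxp hxq
  have hb : x = b := hj x hxp (List.mem_of_mem_tail hxq)
  subst hb
  have := hq.support_nodup
  rw [Walk.support_eq_cons] at this
  exact (List.nodup_cons.mp this).1 hxq

lemma cycle_dropLast_nodup' {x : W} {C : G.Walk x x} (hC : C.IsCycle) :
    C.support.dropLast.Nodup := by
  cases C with
  | nil => simp at hC
  | cons h q =>
    have htail : q.support.Nodup := by simpa using hC.support_nodup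
    have hne : q.support ≠ [] := Walk.support_ne_nil _
    have hlast : q.support.getLast hne = x := by simp [Walk.getLast_support q]
    have hsplit : q.support.dropLast ++ [x] = q.support := by
      conv_rhs => rw [← List.dropLast_append_getLast hne]
      rw [hlast]
    rw [Walk.support_cons, List.dropLast_cons_of_ne_nil hne]
    rw [← hsplit] at htail
    rw [List.nodup_append'] at htail
    refine List.nodup_cons.mpr ⟨?_, htail.1⟩
    intro hx
    exact htail.2.2 hx (by simp)

lemma exists_dart_fst {x z : W} {C : G.Walk x x} (hC : C.IsCycle) (hz : z ∈ C.support) :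
    ∃ d ∈ C.darts, d.toProd.1 = z := by
  have hmem : z ∈ C.darts.map (·.toProd.1) ++ [x] := by
    rw [Walk.map_fst_darts_append]; exact hz
  rcases List.mem_append.mp hmem with h | h
  · obtain ⟨d, hd, hfst⟩ := List.mem_map.mp h
    exact ⟨d, hd, hfst⟩
  · simp only [List.mem_singleton] at h
    subst h
    cases C with
    | nil => simp at hC
    | cons hadj q => exact ⟨⟨(z, _), hadj⟩, by simp, rfl⟩

lemma dart_fst_inj {x : W} {C : G.Walk x x} (hC : C.IsCycle) {d e : G.Dart}
    (hd : d ∈ C.darts) (he : e ∈ C.darts) (h : d.toProd.1 = e.toProd.1) : d = e := by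
  have hnodup : (C.darts.map (·.toProd.1)).Nodup := by
    rw [Walk.map_fst_darts]; exact cycle_dropLast_nodup' hC
  exact List.inj_on_of_nodup_map hnodup hd he h

lemma dart_snd_inj {x : W} {C : G.Walk x x} (hC : C.IsCycle) {d e : G.Dart}
    (hd : d ∈ C.darts) (he : e ∈ C.darts) (h : d.toProd.2 = e.toProd.2) : d = e := by
  have hnodup : (C.darts.map (·.toProd.2)).Nodup := by
    rw [Walk.map_snd_darts]; exact hC.support_nodup
  exact List.inj_on_of_nodup_map hnodup hd he h

open Classical in
/-- successor along a closed walk -/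
noncomputable def csucc {x : W} (C : G.Walk x x) (z : W) : W :=
  if h : ∃ d ∈ C.darts, d.toProd.1 = z then (Classical.choose h).toProd.2 else z

lemma csucc_eq {x : W} {C : G.Walk x x} (hC : C.IsCycle) {d : G.Dart}
    (hd : d ∈ C.darts) : csucc C d.toProd.1 = d.toProd.2 := by
  have hex : ∃ e ∈ C.darts, e.toProd.1 = d.toProd.1 := ⟨d, hd, rfl⟩
  rw [csucc, dif_pos hex]
  obtain ⟨he, hfst⟩ := Classical.choose_spec hex
  rw [dart_fst_inj hC he hd hfst]

lemma csucc_spec {x z : W} {C : G.Walk x x} (hC : C.IsCycle) (hz : z ∈ C.support) :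
    ∃ d ∈ C.darts, d.toProd.1 = z ∧ d.toProd.2 = csucc C z := by
  obtain ⟨d, hd, hfst⟩ := exists_dart_fst hC hz
  exact ⟨d, hd, hfst, by rw [← hfst, csucc_eq hC hd]⟩

lemma csucc_adj {x z : W} {C : G.Walk x x} (hC : C.IsCycle) (hz : z ∈ C.support) :
    G.Adj z (csucc C z) := by
  obtain ⟨d, hd, hfst, hsnd⟩ := csucc_spec hC hz
  rw [← hsnd, ← hfst]; exact d.adj

lemma csucc_mem {x z : W} {C : G.Walk x x} (hC : C.IsCycle) (hz : z ∈ C.support) :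
    csucc C z ∈ C.support := by
  obtain ⟨d, hd, hfst, hsnd⟩ := csucc_spec hC hz
  rw [← hsnd]
  exact Walk.dart_snd_mem_support_of_mem_darts _ hd

lemma csucc_injOn {x : W} {C : G.Walk x x} (hC : C.IsCycle) {z y : W}
    (hz : z ∈ C.support) (hy : y ∈ C.support) (h : csucc C z = csucc C y) : z = y := by
  obtain ⟨d, hd, hdf, hds⟩ := csucc_spec hC hz
  obtain ⟨e, he, hef, hes⟩ := csucc_spec hC hy
  have : d = e := dart_snd_inj hC hd he (by rw [hds, hes, h])
  rw [← hdf, ← hef, this]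

lemma closed_mem_support_iff_tail {a y : W} (p : G.Walk a a) (hp : ¬p.Nil) :
    y ∈ p.support ↔ y ∈ p.support.tail := by
  cases p with
  | nil => simp at hp
  | cons h q =>
    rw [Walk.support_cons, List.tail_cons, List.mem_cons]
    constructor
    · rintro (rfl | h)
      · exact Walk.end_mem_support q
      · exact h
    · exact Or.inr

lemma length_rotate' {x z' : W} (C : G.Walk x x) (hz' : z' ∈ C.support) :
    (C.rotate z' hz').length = C.length := by
  rw [← Walk.length_darts, ← Walk.length_darts]
  exact (Walk.rotate_darts C z' hz').perm.length_eq

lemma not_nil_rotate {x z' : W} (C : G.Walk x x) (hC : ¬C.Nil) (hz' : z' ∈ C.support) :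
    ¬(C.rotate z' hz').Nil := by
  rw [Walk.not_nil_iff_lt_length] at hC ⊢
  rwa [length_rotate']

lemma mem_support_rotate {x z' y : W} (C : G.Walk x x) (hC : ¬C.Nil) (hz' : z' ∈ C.support) :
    y ∈ (C.rotate z' hz').support ↔ y ∈ C.support := by
  rw [closed_mem_support_iff_tail _ (not_nil_rotate C hC hz'),
    closed_mem_support_iff_tail _ hC, (Walk.support_rotate C z' hz').mem_iff]

lemma SimpleGraph.Walk.IsCycle.not_nil' {x : W} {C : G.Walk x x} (hC : C.IsCycle) : ¬C.Nil := by
  rw [Walk.not_nil_iff_lt_length]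
  have := hC.three_le_length
  omega

lemma hamiltonian_of_cycle_cover [Fintype W] {x : W} {C : G.Walk x x} (hC : C.IsCycle)
    (hcov : ∀ y, y ∈ C.support) : G.IsHamiltonian := by
  intro _
  refine ⟨x, C, ?_⟩
  rw [Walk.isHamiltonianCycle_iff_isCycle_and_support_count_tail_eq_one]
  refine ⟨hC, fun a => ?_⟩
  have hmem : a ∈ C.support.tail := (closed_mem_support_iff_tail C hC.not_nil').mp (hcov a)
  exact List.count_eq_one_of_mem hC.support_nodup hmem

/-- Surgery 1: replace the first edge `u-s` of the cycle by a detour `u-d₁-⋯-d₂-s`. -/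
lemma extend1 {u s d₁ d₂ : W} (hus : G.Adj u s) (T : G.Walk s u)
    (hC : (Walk.cons hus T).IsCycle)
    (Q : G.Walk d₁ d₂) (hQ : Q.IsPath)
    (hd : ∀ y ∈ Q.support, y ∉ (Walk.cons hus T).support)
    (h1 : G.Adj u d₁) (h2 : G.Adj d₂ s) :
    ∃ W' : G.Walk u u, W'.IsCycle ∧ (Walk.cons hus T).length < W'.length := by
  have hT : T.IsPath := ((Walk.cons_isCycle_iff T hus).mp hC).1
  have hTsub : ∀ y ∈ T.support, y ∈ (Walk.cons hus T).support := by
    intro y hy; rw [Walk.support_cons]; exact List.mem_cons_of_mem _ hy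
  have hcons : (Walk.cons h2 T).IsPath := by
    refine hT.cons ?_
    intro hmem
    exact hd d₂ (Walk.end_mem_support Q) (hTsub _ hmem)
  have hP : (Q.append (Walk.cons h2 T)).IsPath := by
    refine isPath_append' hQ hcons ?_
    intro y hyQ hyc
    rw [Walk.support_cons] at hyc
    rcases List.mem_cons.mp hyc with h | h
    · exact h
    · exact absurd (hTsub _ h) (hd y hyQ)
  have hedge : s(u, d₁) ∉ (Q.append (Walk.cons h2 T)).edges := by
    intro hmem
    rw [Walk.edges_append] at hmem
    rcases List.mem_append.mp hmem with h | h
    · exact hd u (Walk.fst_mem_support_of_mem_edges Q h)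
        (Walk.start_mem_support _)
    · rw [Walk.edges_cons] at h
      rcases List.mem_cons.mp h with h | h
      · rw [Sym2.eq_iff] at h
        rcases h with ⟨h3, h4⟩ | ⟨h3, h4⟩
        · exact hd d₂ (Walk.end_mem_support Q) (h3 ▸ Walk.start_mem_support (Walk.cons hus T))
        · exact hus.ne h3
      · exact hd d₁ (Walk.start_mem_support Q)
          (hTsub _ (Walk.snd_mem_support_of_mem_edges T h))
  refine ⟨Walk.cons h1 (Q.append (Walk.cons h2 T)),
    SimpleGraph.Path.cons_isCycle ⟨_, hP⟩ h1 hedge, ?_⟩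
  simp only [Walk.length_cons, Walk.length_append]
  omega

/-- Surgery 2: cross-over rerouting.  The cycle is `u-s-⋯-w-t-⋯-u`; given a detour
`u-d₁-⋯-d₂-w` outside the cycle and the chord `s-t`, we build a longer cycle. -/
lemma extend2 {u s w t d₁ d₂ : W} (hus : G.Adj u s) (R1 : G.Walk s w)
    (hwt : G.Adj w t) (R2 : G.Walk t u)
    (hC : (Walk.cons hus (R1.append (Walk.cons hwt R2))).IsCycle)
    (Q : G.Walk d₁ d₂) (hQ : Q.IsPath)
    (hd : ∀ y ∈ Q.support, y ∉ (Walk.cons hus (R1.append (Walk.cons hwt R2))).support)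
    (h1 : G.Adj u d₁) (h2 : G.Adj d₂ w) (hst : G.Adj s t) (hwu : w ≠ u) :
    ∃ W' : G.Walk u u, W'.IsCycle ∧
      (Walk.cons hus (R1.append (Walk.cons hwt R2))).length < W'.length := by
  set T := R1.append (Walk.cons hwt R2) with hTdef
  have hT : T.IsPath := ((Walk.cons_isCycle_iff T hus).mp hC).1
  have hTsub : ∀ y ∈ T.support, y ∈ (Walk.cons hus T).support := by
    intro y hy; rw [Walk.support_cons]; exact List.mem_cons_of_mem _ hy
  have hR1sub : ∀ y ∈ R1.support, y ∈ T.support :=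
    fun y hy => Walk.subset_support_append_left _ _ hy
  have hR2sub : ∀ y ∈ R2.support, y ∈ T.support := by
    intro y hy
    refine Walk.subset_support_append_right _ _ ?_
    rw [Walk.support_cons]; exact List.mem_cons_of_mem _ hy
  have hTnodup : (R1.support ++ R2.support).Nodup := by
    have := hT.support_nodup
    rwa [Walk.support_append, Walk.support_cons, List.tail_cons] at this
  have hdisj : ∀ y ∈ R1.support, y ∉ R2.support := by
    have := (List.nodup_append'.mp hTnodup).2.2
    exact fun y hy hy2 => this hy hy2
  have hR1 : R1.IsPath := Walk.IsPath.mk' (List.nodup_append'.mp hTnodup).1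
  have hR2 : R2.IsPath := Walk.IsPath.mk' (List.nodup_append'.mp hTnodup).2.1
  have hsR1 : s ∈ R1.support := Walk.start_mem_support R1
  have hsR2 : s ∉ R2.support := hdisj s hsR1
  have hInner2 : (Walk.cons hst R2).IsPath := hR2.cons hsR2
  have hInner1 : (R1.reverse.append (Walk.cons hst R2)).IsPath := by
    refine isPath_append' hR1.reverse hInner2 ?_
    intro y hy1 hy2
    rw [Walk.support_reverse, List.mem_reverse] at hy1
    rw [Walk.support_cons] at hy2
    rcases List.mem_cons.mp hy2 with h | h
    · exact h
    · exact absurd h (hdisj y hy1)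
  set Inner1 := R1.reverse.append (Walk.cons hst R2) with hI1def
  have hInner1subC : ∀ y ∈ Inner1.support, y ∈ (Walk.cons hus T).support := by
    intro y hy
    rw [hI1def, Walk.mem_support_append_iff] at hy
    rcases hy with h | h
    · rw [Walk.support_reverse, List.mem_reverse] at h
      exact hTsub _ (hR1sub _ h)
    · rw [Walk.support_cons] at h
      rcases List.mem_cons.mp h with h | h
      · exact h ▸ hTsub _ (hR1sub _ hsR1)
      · exact hTsub _ (hR2sub _ h)
  have hconsd₂ : (Walk.cons h2 Inner1).IsPath := by
    refine hInner1.cons ?_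
    intro hmem
    exact hd d₂ (Walk.end_mem_support Q) (hInner1subC _ hmem)
  have hP : (Q.append (Walk.cons h2 Inner1)).IsPath := by
    refine isPath_append' hQ hconsd₂ ?_
    intro y hyQ hyc
    rw [Walk.support_cons] at hyc
    rcases List.mem_cons.mp hyc with h | h
    · exact h
    · exact absurd (hInner1subC _ h) (hd y hyQ)
  have hedge : s(u, d₁) ∉ (Q.append (Walk.cons h2 Inner1)).edges := by
    intro hmem
    rw [Walk.edges_append] at hmem
    rcases List.mem_append.mp hmem with h | h
    · exact hd u (Walk.fst_mem_support_of_mem_edges Q h) (Walk.start_mem_support _)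
    · rw [Walk.edges_cons] at h
      rcases List.mem_cons.mp h with h | h
      · rw [Sym2.eq_iff] at h
        rcases h with ⟨h3, h4⟩ | ⟨h3, h4⟩
        · exact hd d₂ (Walk.end_mem_support Q)
            (h3 ▸ Walk.start_mem_support (Walk.cons hus T))
        · exact hwu (h3.symm)
      · exact hd d₁ (Walk.start_mem_support Q)
          (hInner1subC _ (Walk.snd_mem_support_of_mem_edges Inner1 h))
  refine ⟨Walk.cons h1 (Q.append (Walk.cons h2 Inner1)),
    SimpleGraph.Path.cons_isCycle ⟨_, hP⟩ h1 hedge, ?_⟩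
  simp only [Walk.length_cons, Walk.length_append, hI1def, hTdef, Walk.length_reverse]
  omega

end ChvatalErdosAux

section ChvatalErdosBridge

lemma kappa_le_of_cutset {W : Type*} [Fintype W] {G : SimpleGraph W} {S : Set W}
    (hS : IsCutset G S) : kappa G ≤ S.ncard := by
  classical
  rw [kappa, if_pos ⟨S, hS⟩]
  exact Nat.sInf_le ⟨S, rfl, hS⟩

lemma le_indepNum {W : Type*} [Fintype W] {G : SimpleGraph W} {T : Set W}
    (hT : ∀ u ∈ T, ∀ v ∈ T, u ≠ v → ¬ G.Adj u v) : T.ncard ≤ _root_.indepNum G := by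
  apply le_csSup
  · refine ⟨Fintype.card W, ?_⟩
    rintro n ⟨T', rfl, -⟩
    calc T'.ncard ≤ (Set.univ : Set W).ncard :=
          Set.ncard_le_ncard (Set.subset_univ _) Set.finite_univ
      _ = Fintype.card W := by rw [Set.ncard_univ, Nat.card_eq_fintype_card]
  · exact ⟨T, rfl, hT⟩

lemma exists_path_outside {W : Type*} {G : SimpleGraph W} {S : Set W} {a b : (Sᶜ : Set W)}
    (h : (GDel G S).Reachable a b) :
    ∃ Q : G.Walk a.val b.val, Q.IsPath ∧ ∀ y ∈ Q.support, y ∈ (Sᶜ : Set W) := by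
  classical
  obtain ⟨w⟩ := h
  let f : G.induce (Sᶜ : Set W) →g G :=
    (SimpleGraph.Embedding.induce (Sᶜ : Set W) : G.induce (Sᶜ : Set W) ↪g G).toHom
  have hinj : Function.Injective (f : _ → W) := fun x y hxy => Subtype.ext hxy
  refine ⟨w.bypass.map f,
    SimpleGraph.Walk.map_isPath_of_injective hinj w.bypass_isPath, ?_⟩
  intro y hy
  replace hy : y ∈ (w.bypass.map f).support := hy
  rw [SimpleGraph.Walk.support_map] at hy
  obtain ⟨z, hz, rfl⟩ := List.mem_map.mp hy
  exact z.2

lemma preconnected_of_gdel_empty {W : Type*} {G : SimpleGraph W}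
    (hp : (GDel G (∅ : Set W)).Preconnected) : G.Preconnected := by
  intro u v
  exact (hp ⟨u, by simp⟩ ⟨v, by simp⟩).map
    (SimpleGraph.Embedding.induce ((∅ : Set W)ᶜ) : G.induce _ ↪g G).toHom

end ChvatalErdosBridge


/-- Chvátal–Erdős: if `κ(G) ≥ α(G)` then `G` is hamiltonian. -/
theorem stmt_15 {V : Type*} [Fintype V] [DecidableEq V] (G : SimpleGraph V)
    (hn : 3 ≤ Fintype.card V) (h : _root_.indepNum G ≤ kappa G) :
    G.IsHamiltonian := by
  classical
  have hpos : 0 < Fintype.card V := by omega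
  obtain ⟨v₀⟩ : Nonempty V := Fintype.card_pos_iff.mp hpos
  have hind1 : 1 ≤ _root_.indepNum G := by
    have h1 : ({v₀} : Set V).ncard ≤ _root_.indepNum G := by
      refine le_indepNum ?_
      intro u hu w hw huw _
      rw [Set.mem_singleton_iff] at hu hw
      exact huw (hu.trans hw.symm)
    simpa [Set.ncard_singleton] using h1
  have hnocut0 : ¬ IsCutset G (∅ : Set V) := by
    intro hc
    have h2 := kappa_le_of_cutset hc
    rw [Set.ncard_empty] at h2
    omega
  have hpre : G.Preconnected := preconnected_of_gdel_empty (not_not.mp hnocut0)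
  -- every vertex has two distinct neighbours
  have hnbrs : ∀ v : V, ∃ a b : V, a ≠ b ∧ G.Adj v a ∧ G.Adj v b := by
    intro v
    by_cases hcomp : ∀ a b : V, a ≠ b → G.Adj a b
    · have h2 : 1 < (Finset.univ.erase v).card := by
        rw [Finset.card_erase_of_mem (Finset.mem_univ v), Finset.card_univ]; omega
      obtain ⟨a, ha, b, hb, hab⟩ := Finset.one_lt_card.mp h2
      exact ⟨a, b, hab, hcomp v a (Finset.ne_of_mem_erase ha).symm,
        hcomp v b (Finset.ne_of_mem_erase hb).symm⟩
    · push_neg at hcomp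
      obtain ⟨a, b, hab, hnadj⟩ := hcomp
      have hk2 : 2 ≤ kappa G := by
        refine le_trans ?_ h
        have h2 : ({a, b} : Set V).ncard ≤ _root_.indepNum G := by
          refine le_indepNum ?_
          intro p hp q hq hpq hadjpq
          simp only [Set.mem_insert_iff, Set.mem_singleton_iff] at hp hq
          rcases hp with rfl | rfl <;> rcases hq with rfl | rfl
          · exact hpq rfl
          · exact hnadj hadjpq
          · exact hnadj hadjpq.symm
          · exact hpq rfl
        rwa [Set.ncard_pair hab] at h2
      by_contra hv
      have hsub : (G.neighborSet v).Subsingleton := by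
        intro p hp q hq
        by_contra hne
        exact hv ⟨p, q, hne, hp, hq⟩
      have hS1 : (G.neighborSet v).ncard ≤ 1 := by
        rcases hsub.eq_empty_or_singleton with h' | ⟨w, h'⟩ <;> simp [h']
      have hne_univ : G.neighborSet v ∪ {v} ≠ Set.univ := by
        intro heq
        have h3 : (Set.univ : Set V).ncard ≤ 2 := by
          rw [← heq]
          have := Set.ncard_union_le (G.neighborSet v) ({v} : Set V)
          simp only [Set.ncard_singleton] at this
          omega
        rw [Set.ncard_univ, Nat.card_eq_fintype_card] at h3
        omega
      obtain ⟨u, hu⟩ := (Set.ne_univ_iff_exists_notMem _).mp hne_univ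
      have huv : u ≠ v := by
        intro h'
        exact hu (Set.mem_union_right _ (by simp [h']))
      have huN : u ∉ G.neighborSet v := fun h' => hu (Set.mem_union_left _ h')
      have hcut : IsCutset G (G.neighborSet v) := by
        intro hpre'
        have hvmem : v ∈ ((G.neighborSet v)ᶜ : Set V) := by simp
        have humem : u ∈ ((G.neighborSet v)ᶜ : Set V) := by simpa using huN
        obtain ⟨w⟩ := hpre' ⟨v, hvmem⟩ ⟨u, humem⟩
        by_cases hnil : w.Nil
        · rw [SimpleGraph.Walk.nil_iff_length_eq] at hnil
          have h4 := SimpleGraph.Walk.eq_of_length_eq_zero hnil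
          exact huv (congrArg Subtype.val h4).symm
        · obtain ⟨c, hadj', q, -⟩ := SimpleGraph.Walk.not_nil_iff.mp hnil
          have hadjG : G.Adj v c.val := hadj'
          exact c.2 hadjG
      have h5 := kappa_le_of_cutset hcut
      omega
  -- a cycle exists
  have hcycex : ∃ (x : V) (C : G.Walk x x), C.IsCycle := by
    by_contra h'
    push_neg at h'
    have hacyc : G.IsAcyclic := fun v c hc => h' v c hc
    haveI : Nonempty V := ⟨v₀⟩
    have hconn : G.Connected := SimpleGraph.Connected.mk hpre
    have htree : G.IsTree := ⟨hconn, hacyc⟩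
    have hedges : G.edgeFinset.card + 1 = Fintype.card V := htree.card_edgeFinset
    have hdeg : ∀ v : V, 2 ≤ G.degree v := by
      intro v
      obtain ⟨a, b, hab, ha, hb⟩ := hnbrs v
      have h6 : 1 < (G.neighborFinset v).card :=
        Finset.one_lt_card.mpr ⟨a, (SimpleGraph.mem_neighborFinset G v a).mpr ha,
          b, (SimpleGraph.mem_neighborFinset G v b).mpr hb, hab⟩
      exact h6
    have hsum : 2 * Fintype.card V ≤ ∑ v : V, G.degree v := by
      calc 2 * Fintype.card V = ∑ _v : V, 2 := by
            simp [Finset.sum_const, Finset.card_univ, mul_comm]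
        _ ≤ ∑ v, G.degree v := Finset.sum_le_sum (fun i _ => hdeg i)
    rw [SimpleGraph.sum_degrees_eq_twice_card_edges] at hsum
    omega
  obtain ⟨x₀, C0, hC0⟩ := hcycex
  -- a longest cycle
  set L := {ℓ : ℕ | ∃ (x : V) (C : G.Walk x x), C.IsCycle ∧ C.length = ℓ} with hLdef
  have hbdd : BddAbove L := by
    refine ⟨Fintype.card V, ?_⟩
    rintro ℓ ⟨x, C, hC, rfl⟩
    have h1 := SimpleGraph.Walk.length_support C
    have h2 : C.support.tail.Nodup := hC.support_nodup
    have h3 : C.support.tail.length ≤ Fintype.card V := h2.length_le_card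
    rw [List.length_tail, h1] at h3
    omega
  have hmemL : sSup L ∈ L := Nat.sSup_mem ⟨C0.length, x₀, C0, hC0, rfl⟩ hbdd
  obtain ⟨x, C, hC, hlen⟩ := hmemL
  have hmax : ∀ (y : V) (C' : G.Walk y y), C'.IsCycle → C'.length ≤ C.length := by
    intro y C' hC'
    rw [hlen]
    exact le_csSup hbdd ⟨y, C', hC', rfl⟩
  by_cases hcov : ∀ y : V, y ∈ C.support
  · exact hamiltonian_of_cycle_cover hC hcov
  push_neg at hcov
  obtain ⟨v, hv⟩ := hcov
  exfalso
  -- the component of v in G − C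
  set S : Set V := {y | y ∈ C.support} with hSdef
  have hvS : v ∈ (Sᶜ : Set V) := hv
  set D := (GDel G S).connectedComponentMk ⟨v, hvS⟩ with hDdef
  set Dset : Set V := Subtype.val '' D.supp with hDsetdef
  have hDsub : ∀ y ∈ Dset, y ∉ C.support := by
    rintro y ⟨⟨y', hy'⟩, -, rfl⟩
    exact hy'
  have hvD : v ∈ Dset := ⟨⟨v, hvS⟩, by rw [SimpleGraph.ConnectedComponent.mem_supp_iff], rfl⟩
  have hclosure : ∀ a ∈ Dset, ∀ b : V, G.Adj a b → b ∉ C.support → b ∈ Dset := by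
    rintro a ⟨a₀, ha₀, rfl⟩ b hadj hbC
    have hbS : b ∈ (Sᶜ : Set V) := hbC
    have hadj' : (GDel G S).Adj a₀ ⟨b, hbS⟩ := hadj
    refine ⟨⟨b, hbS⟩, ?_, rfl⟩
    rw [SimpleGraph.ConnectedComponent.mem_supp_iff] at ha₀ ⊢
    rw [← ha₀]
    exact SimpleGraph.ConnectedComponent.sound hadj'.symm.reachable
  have hDpath : ∀ d₁ d₂ : V, d₁ ∈ Dset → d₂ ∈ Dset →
      ∃ Q : G.Walk d₁ d₂, Q.IsPath ∧ ∀ y ∈ Q.support, y ∉ C.support := by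
    rintro d₁ d₂ ⟨a₀, ha₀, rfl⟩ ⟨b₀, hb₀, rfl⟩
    rw [SimpleGraph.ConnectedComponent.mem_supp_iff] at ha₀ hb₀
    have hreach := SimpleGraph.ConnectedComponent.exact (ha₀.trans hb₀.symm)
    obtain ⟨Q, hQ, hQmem⟩ := exists_path_outside hreach
    exact ⟨Q, hQ, fun y hy => hQmem y hy⟩
  set A : Set V := {y | y ∈ C.support ∧ ∃ d ∈ Dset, G.Adj y d} with hAdef
  have hAne : A.Nonempty := by
    have key : ∀ (a b : V) (p : G.Walk a b), a ∈ Dset → b ∈ C.support → A.Nonempty := by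
      intro a b p
      induction p with
      | nil => exact fun ha hb => absurd hb (hDsub _ ha)
      | @cons a c b hadj q ih =>
        intro ha hb
        by_cases hcC : c ∈ C.support
        · exact ⟨c, hcC, a, ha, hadj.symm⟩
        · exact ih (hclosure a ha c hadj hcC) hb
    exact key v x ((hpre v x).some) hvD (SimpleGraph.Walk.start_mem_support C)
  have hCnn := hC.not_nil'
  -- decomposition of the rotated cycle
  have hdecomp : ∀ u, ∀ hu : u ∈ C.support, ∃ (s : V) (hus : G.Adj u s) (T : G.Walk s u),
      C.rotate u hu = SimpleGraph.Walk.cons hus T ∧ s = csucc C u := by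
    intro u hu
    obtain ⟨s', hus', T, hEq⟩ := SimpleGraph.Walk.not_nil_iff.mp (not_nil_rotate C hCnn hu)
    refine ⟨s', hus', T, hEq, ?_⟩
    have hdart : (⟨(u, s'), hus'⟩ : G.Dart) ∈ C.darts := by
      have h1 : (⟨(u, s'), hus'⟩ : G.Dart) ∈ (C.rotate u hu).darts := by
        rw [hEq, SimpleGraph.Walk.darts_cons]
        exact List.mem_cons_self
      exact (SimpleGraph.Walk.rotate_darts C u hu).mem_iff.mp h1
    exact (csucc_eq hC hdart).symm
  -- no attachment vertex is followed by an attachment vertex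
  have L1 : ∀ u ∈ A, csucc C u ∉ A := by
    rintro u ⟨huC, d₁, hd₁, hadj1⟩ ⟨hsC, d₂, hd₂, hadj2⟩
    obtain ⟨s, hus, T, hEq, hs⟩ := hdecomp u huC
    obtain ⟨Q, hQ, hQC⟩ := hDpath d₁ d₂ hd₁ hd₂
    have hC₁ : (SimpleGraph.Walk.cons hus T).IsCycle := hEq ▸ hC.rotate huC
    have hQd : ∀ y ∈ Q.support, y ∉ (SimpleGraph.Walk.cons hus T).support := by
      intro y hy hmem
      rw [← hEq] at hmem
      exact hQC y hy ((mem_support_rotate C hCnn huC).mp hmem)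
    have h2 : G.Adj d₂ s := by rw [hs]; exact hadj2.symm
    obtain ⟨W', hW', hWlen⟩ := extend1 hus T hC₁ Q hQ hQd hadj1 h2
    have hle := hmax u W' hW'
    have hlenC : (SimpleGraph.Walk.cons hus T).length = C.length := by
      rw [← hEq, length_rotate']
    omega
  -- successors of attachment vertices are pairwise non-adjacent
  have L2 : ∀ u ∈ A, ∀ w ∈ A, u ≠ w → ¬ G.Adj (csucc C u) (csucc C w) := by
    rintro u ⟨huC, d₁, hd₁, hadj1⟩ w ⟨hwC, d₂, hd₂, hadj2⟩ huw hadjst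
    obtain ⟨s, hus, T, hEq, hs⟩ := hdecomp u huC
    have hwC₁ : w ∈ (C.rotate u huC).support := (mem_support_rotate C hCnn huC).mpr hwC
    have hwT : w ∈ T.support := by
      rw [hEq, SimpleGraph.Walk.support_cons] at hwC₁
      rcases List.mem_cons.mp hwC₁ with h' | h'
      · exact absurd h'.symm huw
      · exact h'
    have hdnn : ¬ (T.dropUntil w hwT).Nil := by
      intro hnil
      rw [SimpleGraph.Walk.nil_iff_length_eq] at hnil
      exact huw (SimpleGraph.Walk.eq_of_length_eq_zero hnil).symm
    obtain ⟨t, hwt, R2, hdEq⟩ := SimpleGraph.Walk.not_nil_iff.mp hdnn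
    have ht : t = csucc C w := by
      have hdart : (⟨(w, t), hwt⟩ : G.Dart) ∈ C.darts := by
        have h1 : (⟨(w, t), hwt⟩ : G.Dart) ∈ (T.dropUntil w hwT).darts := by
          rw [hdEq, SimpleGraph.Walk.darts_cons]
          exact List.mem_cons_self
        have h2 := SimpleGraph.Walk.darts_dropUntil_subset T hwT h1
        have h3 : (⟨(w, t), hwt⟩ : G.Dart) ∈ (C.rotate u huC).darts := by
          rw [hEq, SimpleGraph.Walk.darts_cons]
          exact List.mem_cons_of_mem _ h2
        exact (SimpleGraph.Walk.rotate_darts C u huC).mem_iff.mp h3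
      exact (csucc_eq hC hdart).symm
    have hTeq : T = (T.takeUntil w hwT).append (SimpleGraph.Walk.cons hwt R2) := by
      rw [← hdEq]
      exact (SimpleGraph.Walk.take_spec T hwT).symm
    have hC₂ : (SimpleGraph.Walk.cons hus
        ((T.takeUntil w hwT).append (SimpleGraph.Walk.cons hwt R2))).IsCycle := by
      rw [← hTeq]
      exact hEq ▸ hC.rotate huC
    obtain ⟨Q, hQ, hQC⟩ := hDpath d₁ d₂ hd₁ hd₂
    have hQd : ∀ y ∈ Q.support, y ∉ (SimpleGraph.Walk.cons hus
        ((T.takeUntil w hwT).append (SimpleGraph.Walk.cons hwt R2))).support := by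
      intro y hy hmem
      rw [← hTeq, ← hEq] at hmem
      exact hQC y hy ((mem_support_rotate C hCnn huC).mp hmem)
    have hst : G.Adj s t := by rw [hs, ht]; exact hadjst
    obtain ⟨W', hW', hWlen⟩ := extend2 hus (T.takeUntil w hwT) hwt R2 hC₂ Q hQ hQd
      hadj1 hadj2.symm hst (fun h' => huw h'.symm)
    have hle := hmax u W' hW'
    have hlenC : (SimpleGraph.Walk.cons hus
        ((T.takeUntil w hwT).append (SimpleGraph.Walk.cons hwt R2))).length = C.length := by
      rw [← hTeq, ← hEq, length_rotate']
    omega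
  have L3 : ∀ u ∈ A, ∀ d ∈ Dset, ¬ G.Adj (csucc C u) d := by
    intro u hu d hd hadj
    exact L1 u hu ⟨csucc_mem hC hu.1, d, hd, hadj⟩
  -- the independent set
  set I : Set V := insert v ((fun z => csucc C z) '' A) with hIdef
  have hIind : ∀ p ∈ I, ∀ q ∈ I, p ≠ q → ¬ G.Adj p q := by
    rintro p hp q hq hpq hadj
    rw [hIdef, Set.mem_insert_iff] at hp hq
    rcases hp with rfl | ⟨a, ha, rfl⟩
    · rcases hq with rfl | ⟨b, hb, rfl⟩
      · exact hpq rfl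
      · exact L3 b hb p hvD hadj.symm
    · rcases hq with rfl | ⟨b, hb, rfl⟩
      · exact L3 a ha q hvD hadj
      · exact L2 a ha b hb (fun h' => hpq (by rw [h'])) hadj
  have hIub : I.ncard ≤ _root_.indepNum G := le_indepNum hIind
  have hvim : v ∉ (fun z => csucc C z) '' A := by
    rintro ⟨a, ha, h'⟩
    exact hv (h' ▸ csucc_mem hC ha.1)
  have hIcard : I.ncard = A.ncard + 1 := by
    rw [hIdef, Set.ncard_insert_of_notMem hvim (Set.toFinite _),
      Set.ncard_image_of_injOn (fun a ha b hb h' => csucc_injOn hC ha.1 hb.1 h')]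
  -- A is a cutset
  obtain ⟨u₀, hu₀⟩ := hAne
  have hvA : v ∈ (Aᶜ : Set V) := fun h' => hv h'.1
  have ht₀A : csucc C u₀ ∈ (Aᶜ : Set V) := L1 u₀ hu₀
  have hstay : ∀ (a b : (Aᶜ : Set V)) (p : (GDel G A).Walk a b),
      a.val ∈ Dset → b.val ∈ Dset := by
    intro a b p
    induction p with
    | nil => exact id
    | @cons a' c' b' hadj q ih =>
      intro ha
      have hadjG : G.Adj a'.val c'.val := hadj
      by_cases hcC : c'.val ∈ C.support
      · exact absurd (⟨hcC, a'.val, ha, hadjG.symm⟩ : c'.val ∈ A) c'.2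
      · exact ih (hclosure a'.val ha c'.val hadjG hcC)
  have hcutA : IsCutset G A := by
    intro hpre'
    obtain ⟨w⟩ := hpre' ⟨v, hvA⟩ ⟨csucc C u₀, ht₀A⟩
    exact hDsub _ (hstay _ _ w hvD) (csucc_mem hC hu₀.1)
  have hkA := kappa_le_of_cutset hcutA
  omega
end

section
/- Let G be a graph on at least 3 vertices with κ(G) ≥ α(G) + 1. Then G is Hamiltonian-connected, i.e., between every pair of distinct vertices there is a Hamiltonian path. -/
open SimpleGraph

variable {V : Type*} {α : Type*}

namespace CEHelp
open List
set_option linter.unusedSectionVars false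

set_option linter.unusedSectionVars false
variable {V : Type*} [DecidableEq V] {G : SimpleGraph V} {u v : V}

lemma getIdx {l l1 r : List V} {a : V} (h : l = l1 ++ a :: r) : l[l1.length]? = some a := by
  subst h; rw [List.getElem?_append_right (le_refl _)]; simp

lemma idx_unique {l : List V} (hl : l.Nodup) {i j : ℕ} {a : V}
    (hi : l[i]? = some a) (hj : l[j]? = some a) : i = j := by
  rw [List.getElem?_eq_some_iff] at hi hj
  obtain ⟨hi1, hi2⟩ := hi; obtain ⟨hj1, hj2⟩ := hj
  exact List.Nodup.getElem_inj_iff hl |>.mp (hi2.trans hj2.symm)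

/-- `z` directly follows `a` in the list `l`. -/
def NextOn (l : List V) (a z : V) : Prop := ∃ l1 r, l = l1 ++ a :: z :: r

lemma NextOn.mem {l : List V} {a z : V} (h : NextOn l a z) : z ∈ l := by
  obtain ⟨l1, r, rfl⟩ := h; simp

lemma NextOn.mem' {l : List V} {a z : V} (h : NextOn l a z) : a ∈ l := by
  obtain ⟨l1, r, rfl⟩ := h; simp

lemma NextOn.functional {l : List V} (hl : l.Nodup) {a z z' : V}
    (h1 : NextOn l a z) (h2 : NextOn l a z') : z = z' := by
  obtain ⟨l1, r1, e1⟩ := h1; obtain ⟨l2, r2, e2⟩ := h2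
  have ha1 : l[l1.length]? = some a := getIdx e1
  have ha2 : l[l2.length]? = some a := getIdx e2
  have hlen : l1.length = l2.length := idx_unique hl ha1 ha2
  have hz1 : l[l1.length + 1]? = some z := by
    have : l = (l1 ++ [a]) ++ z :: r1 := by simp [e1]
    simpa using getIdx this
  have hz2 : l[l1.length + 1]? = some z' := by
    have : l = (l2 ++ [a]) ++ z' :: r2 := by simp [e2]
    rw [hlen]; simpa using getIdx this
  rw [hz1] at hz2; exact (Option.some_injective _ hz2)

lemma NextOn.inj {l : List V} (hl : l.Nodup) {a b z : V}
    (h1 : NextOn l a z) (h2 : NextOn l b z) : a = b := by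
  obtain ⟨l1, r1, e1⟩ := h1; obtain ⟨l2, r2, e2⟩ := h2
  have hz1 : l[l1.length + 1]? = some z := by
    have : l = (l1 ++ [a]) ++ z :: r1 := by simp [e1]
    simpa using getIdx this
  have hz2 : l[l2.length + 1]? = some z := by
    have : l = (l2 ++ [b]) ++ z :: r2 := by simp [e2]
    simpa using getIdx this
  have hlen : l1.length = l2.length := by
    have := idx_unique hl hz1 hz2; omega
  have ha1 : l[l1.length]? = some a := getIdx e1
  have ha2 : l[l1.length]? = some b := by rw [hlen]; exact getIdx e2
  rw [ha1] at ha2; exact (Option.some_injective _ ha2)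

lemma mem_of_lt_aux {l : List V} (hl : l.Nodup) {l1 l2 r1 r2 : List V} {a b : V}
    (h1 : l = l1 ++ a :: r1) (h2 : l = l2 ++ b :: r2) (hmem : b ∈ l1) : a ∈ r2 := by
  obtain ⟨i, hi, hib⟩ := List.getElem_of_mem hmem
  have hbl : l[i]? = some b := by
    subst h1
    rw [List.getElem?_append_left (by omega : i < l1.length)]
    rw [List.getElem?_eq_getElem hi, hib]
  have hb2 : l[l2.length]? = some b := getIdx h2
  have hilt : l2.length < l1.length := by
    have := idx_unique hl hbl hb2; omega
  have ha : l[l1.length]? = some a := getIdx h1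
  have hdrop : l.drop (l2.length + 1) = r2 := by
    subst h2
    rw [show l2 ++ b :: r2 = (l2 ++ [b]) ++ r2 by simp, List.drop_left']
    simp
  have : (l.drop (l2.length + 1))[l1.length - (l2.length + 1)]? = some a := by
    rw [List.getElem?_drop]
    rw [show l2.length + 1 + (l1.length - (l2.length + 1)) = l1.length by omega]
    exact ha
  rw [hdrop] at this
  exact List.mem_of_getElem? this

lemma support_concat (p : G.Walk u v) : p.support = p.support.dropLast ++ [v] := by
  induction p with
  | nil => simp
  | cons h q ih =>
    rw [Walk.support_cons, List.dropLast_cons_of_ne_nil q.support_ne_nil, List.cons_append]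
    exact congrArg _ ih

lemma split_at (P : G.Walk u v) {a : V} (ha : a ∈ P.support) (hav : a ≠ v) :
    ∃ (Q : G.Walk u a) (s : V) (hadj : G.Adj a s) (R : G.Walk s v),
      P = Q.append (Walk.cons hadj R) := by
  have h1 := P.take_spec ha
  have hnn : ¬ (P.dropUntil a ha).Nil := Walk.not_nil_of_ne hav
  rw [Walk.not_nil_iff] at hnn
  obtain ⟨s, hadj, R, hR⟩ := hnn
  exact ⟨P.takeUntil a ha, s, hadj, R, by conv_lhs => rw [← h1, hR]⟩

lemma support_split {a s : V} {P : G.Walk u v} (Q : G.Walk u a) (hadj : G.Adj a s)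
    (R : G.Walk s v) (h : P = Q.append (Walk.cons hadj R)) :
    P.support = Q.support.dropLast ++ a :: s :: R.support.tail := by
  subst h
  rw [Walk.support_append, Walk.support_cons, List.tail_cons]
  conv_lhs => rw [support_concat Q, R.support_eq_cons]
  simp only [List.append_assoc, List.singleton_append, List.cons_append, List.nil_append]

lemma support_split' {a s : V} {P : G.Walk u v} (Q : G.Walk u a) (hadj : G.Adj a s)
    (R : G.Walk s v) (h : P = Q.append (Walk.cons hadj R)) :
    P.support = Q.support ++ R.support := by
  subst h
  rw [Walk.support_append, Walk.support_cons, List.tail_cons]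


set_option linter.unusedSectionVars false
variable {V : Type*} [DecidableEq V] {G : SimpleGraph V} {u v : V}

lemma support_concat' (p : G.Walk u v) : p.support = p.support.dropLast ++ [v] := by
  induction p with
  | nil => simp
  | cons h q ih =>
    rw [Walk.support_cons, List.dropLast_cons_of_ne_nil q.support_ne_nil, List.cons_append]
    exact congrArg _ ih

/-- Rerouting lemma A: the successor of an attachment vertex has no neighbour in `H`. -/
lemma no_adj_succ_H (P : G.Walk u v) (hP : P.IsPath)
    (hmax : ∀ W : G.Walk u v, W.IsPath → W.length ≤ P.length)
    (Hset : Set V) (hdisj : ∀ y ∈ Hset, y ∉ P.support)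
    (hconn : ∀ h1 ∈ Hset, ∀ h2 ∈ Hset,
      ∃ w : G.Walk h1 h2, w.IsPath ∧ ∀ y ∈ w.support, y ∈ Hset)
    {a s h₀ x' : V} (Q : G.Walk u a) (hadj : G.Adj a s) (R : G.Walk s v)
    (hsplit : P = Q.append (Walk.cons hadj R))
    (hh₀ : h₀ ∈ Hset) (hah₀ : G.Adj a h₀) (hx' : x' ∈ Hset) :
    ¬ G.Adj s x' := by
  intro hsx
  obtain ⟨w, hw, hwH⟩ := hconn h₀ hh₀ x' hx'
  set W : G.Walk u v := Q.append (Walk.cons hah₀ (w.append (Walk.cons hsx.symm R))) with hW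
  have hWs : W.support = Q.support ++ (w.support ++ R.support) := by
    rw [hW, Walk.support_append, Walk.support_cons, List.tail_cons, Walk.support_append,
      Walk.support_cons, List.tail_cons]
  have hPs : P.support = Q.support ++ R.support := by
    rw [hsplit, Walk.support_append, Walk.support_cons, List.tail_cons]
  have hperm : W.support.Perm (P.support ++ w.support) := by
    rw [hWs, hPs]
    calc Q.support ++ (w.support ++ R.support)
        ~ Q.support ++ (R.support ++ w.support) :=
          List.Perm.append_left _ List.perm_append_comm
      _ = Q.support ++ R.support ++ w.support := (List.append_assoc _ _ _).symm
  have hnd : (P.support ++ w.support).Nodup := by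
    rw [List.nodup_append]
    exact ⟨hP.support_nodup, hw.support_nodup, fun y hy z hz hyz => hdisj z (hwH z hz) (hyz ▸ hy)⟩
  have hWp : W.IsPath := (Walk.isPath_def _).mpr (hperm.nodup_iff.mpr hnd)
  have hle := hmax W hWp
  have hlen : W.support.length = P.support.length + w.support.length := by
    rw [hperm.length_eq, List.length_append]
  have hw1 : 1 ≤ w.support.length := by
    have := w.support_ne_nil
    cases hh : w.support <;> simp [hh] at this ⊢
  rw [Walk.length_support, Walk.length_support] at hlen
  omega

/-- Rerouting lemma B: successors of two attachment vertices are non-adjacent. -/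
lemma no_adj_succ_succ (P : G.Walk u v) (hP : P.IsPath)
    (hmax : ∀ W : G.Walk u v, W.IsPath → W.length ≤ P.length)
    (Hset : Set V) (hdisj : ∀ y ∈ Hset, y ∉ P.support)
    (hconn : ∀ h1 ∈ Hset, ∀ h2 ∈ Hset,
      ∃ w : G.Walk h1 h2, w.IsPath ∧ ∀ y ∈ w.support, y ∈ Hset)
    {a b s t h₁ h₂ : V}
    (Qa : G.Walk u a) (has : G.Adj a s) (Ra : G.Walk s v)
    (hsplita : P = Qa.append (Walk.cons has Ra))
    (M0 : G.Walk s b) (hbt : G.Adj b t) (R' : G.Walk t v)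
    (hsplitb : Ra = M0.append (Walk.cons hbt R'))
    (hh₁ : h₁ ∈ Hset) (hah₁ : G.Adj a h₁) (hh₂ : h₂ ∈ Hset) (hbh₂ : G.Adj b h₂) :
    ¬ G.Adj s t := by
  intro hst
  obtain ⟨w, hw, hwH⟩ := hconn h₁ hh₁ h₂ hh₂
  set Det : G.Walk a b := Walk.cons hah₁ (w.append (Walk.cons hbh₂.symm Walk.nil)) with hDet
  set W : G.Walk u v :=
    Qa.append (Det.append ((M0.reverse).append (Walk.cons hst R'))) with hW
  have hDs : Det.support = a :: (w.support ++ [b]) := by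
    rw [hDet, Walk.support_cons, Walk.support_append, Walk.support_cons, List.tail_cons,
      Walk.support_nil]
  have hM0 : M0.support = M0.support.dropLast ++ [b] := support_concat' M0
  have hMrev : M0.reverse.support = b :: (M0.support.dropLast).reverse := by
    rw [Walk.support_reverse]
    conv_lhs => rw [hM0]
    simp
  have hWs : W.support =
      Qa.support ++ ((w.support ++ [b]) ++ ((M0.support.dropLast).reverse ++ R'.support)) := by
    rw [hW, Walk.support_append, Walk.support_append, hDs, Walk.support_append,
      hMrev, Walk.support_cons]
    simp
  have hPs : P.support = Qa.support ++ (M0.support.dropLast ++ ([b] ++ R'.support)) := by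
    rw [hsplita, Walk.support_append, Walk.support_cons, List.tail_cons,
      hsplitb, Walk.support_append, Walk.support_cons, List.tail_cons]
    conv_lhs => rw [hM0]
    simp only [List.append_assoc, List.singleton_append, List.cons_append]
  have hperm : W.support.Perm (P.support ++ w.support) := by
    rw [hWs, hPs]
    refine List.perm_iff_count.mpr fun y => ?_
    simp only [List.count_append, List.count_reverse]
    omega
  have hnd : (P.support ++ w.support).Nodup := by
    rw [List.nodup_append]
    exact ⟨hP.support_nodup, hw.support_nodup, fun y hy z hz hyz => hdisj z (hwH z hz) (hyz ▸ hy)⟩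
  have hWp : W.IsPath := (Walk.isPath_def _).mpr (hperm.nodup_iff.mpr hnd)
  have hle := hmax W hWp
  have hlen : W.support.length = P.support.length + w.support.length := by
    rw [hperm.length_eq, List.length_append]
  have hw1 : 1 ≤ w.support.length := by
    have := w.support_ne_nil
    cases hh : w.support <;> simp [hh] at this ⊢
  rw [Walk.length_support, Walk.length_support] at hlen
  omega


set_option linter.unusedSectionVars false
variable {V : Type*} [DecidableEq V] {G : SimpleGraph V}

-- adjacency in induced graph
example (s : Set V) (a b : s) (h : G.Adj a b) : (G.induce s).Adj a b := by
  simp [h]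

example (s : Set V) (a b : s) (h : (G.induce s).Adj a b) : G.Adj a b := by
  simpa using h

-- component supp mem
example (s : Set V) (c d : s) (h : (G.induce s).Adj c d) :
    (G.induce s).connectedComponentMk c = (G.induce s).connectedComponentMk d :=
  ConnectedComponent.sound h.reachable

-- walks inside a component, mapped to G
lemma comp_conn (s : Set V) (C : (G.induce s).ConnectedComponent)
    {h1 h2 : V} (hh1 : h1 ∈ Subtype.val '' C.supp) (hh2 : h2 ∈ Subtype.val '' C.supp) :
    ∃ w : G.Walk h1 h2, w.IsPath ∧ ∀ y ∈ w.support, y ∈ Subtype.val '' C.supp := by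
  obtain ⟨p1, hp1, rfl⟩ := hh1
  obtain ⟨p2, hp2, rfl⟩ := hh2
  rw [ConnectedComponent.mem_supp_iff] at hp1 hp2
  have hreach : (G.induce s).Reachable p1 p2 := ConnectedComponent.exact (hp1.trans hp2.symm)
  obtain ⟨w0⟩ := hreach
  let w1 := w0.toPath
  refine ⟨(w1 : (G.induce s).Walk p1 p2).map (Embedding.induce s).toHom,
    Walk.map_isPath_of_injective ?_ w1.2, ?_⟩
  · exact fun a b hab => Subtype.ext hab
  · intro y hy
    have e := Walk.support_map (Embedding.induce s).toHom (w1 : (G.induce s).Walk p1 p2)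
    replace hy : y ∈ List.map (⇑(Embedding.induce (G := G) s).toHom) (w1 : (G.induce s).Walk p1 p2).support := by rw [← e]; exact hy
    obtain ⟨y0, hy0, rfl⟩ := List.mem_map.mp hy
    refine ⟨y0, ?_, rfl⟩
    rw [ConnectedComponent.mem_supp_iff, ← hp1]
    exact (ConnectedComponent.sound ⟨((w1 : (G.induce s).Walk p1 p2).takeUntil y0 hy0)⟩).symm


variable {V : Type*} [DecidableEq V] {G : SimpleGraph V} {u v : V}

lemma kappa_le {V : Type*} [Fintype V] {G : SimpleGraph V} {A : Set V}
    (hA : IsCutset G A) : kappa G ≤ A.ncard := by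
  unfold kappa
  rw [if_pos ⟨A, hA⟩]
  exact Nat.sInf_le ⟨A, rfl, hA⟩

lemma le_indepNum {V : Type*} [Fintype V] {G : SimpleGraph V} {T : Set V}
    (hT : ∀ a ∈ T, ∀ b ∈ T, a ≠ b → ¬ G.Adj a b) : T.ncard ≤ _root_.indepNum G := by
  apply le_csSup
  · refine ⟨Fintype.card V, fun n ⟨S, hS, _⟩ => ?_⟩
    rw [← hS]
    calc S.ncard ≤ (Set.univ : Set V).ncard :=
          Set.ncard_le_ncard (Set.subset_univ _) (Set.toFinite _)
      _ = Fintype.card V := by rw [Set.ncard_univ, Nat.card_eq_fintype_card]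
  · exact ⟨T, rfl, hT⟩

lemma cutset_empty {V : Type*} {G : SimpleGraph V} (h : ¬ G.Preconnected) :
    IsCutset G (∅ : Set V) := by
  intro hpc
  apply h
  intro c d
  have := hpc ⟨c, by simp⟩ ⟨d, by simp⟩
  exact this.map (Embedding.induce _).toHom

end CEHelp

set_option maxHeartbeats 1000000 in
/-- Chvátal–Erdős: if `κ(G) ≥ α(G) + 1` then `G` is hamiltonian-connected. -/
theorem stmt_16 {V : Type*} [Fintype V] [DecidableEq V] (G : SimpleGraph V)
    (hn : 3 ≤ Fintype.card V) (h : _root_.indepNum G + 1 ≤ kappa G) :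
    ∀ u v : V, u ≠ v → ∃ p : G.Walk u v, p.IsHamiltonian := by
  intro u v huv
  by_cases hpre : G.Preconnected
  swap
  · exfalso
    have h1 := CEHelp.kappa_le (CEHelp.cutset_empty hpre)
    simp [Set.ncard_empty] at h1
    omega
  -- choose a longest u-v path
  obtain ⟨P, hP, hmax⟩ : ∃ P : G.Walk u v, P.IsPath ∧
      ∀ W : G.Walk u v, W.IsPath → W.length ≤ P.length := by
    set L : Set ℕ := {n | ∃ W : G.Walk u v, W.IsPath ∧ W.length = n} with hL
    have hne : L.Nonempty := by
      obtain ⟨w⟩ := hpre u v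
      exact ⟨(w.toPath : G.Walk u v).length, (w.toPath : G.Walk u v), w.toPath.2, rfl⟩
    have hbdd : BddAbove L := by
      refine ⟨Fintype.card V, fun n hn' => ?_⟩
      obtain ⟨W, hW, rfl⟩ := hn'
      exact le_of_lt hW.length_lt
    obtain ⟨P, hPp, hPl⟩ := Nat.sSup_mem hne hbdd
    exact ⟨P, hPp, fun W hW => hPl ▸ le_csSup hbdd ⟨W, hW, rfl⟩⟩
  refine ⟨P, fun y => ?_⟩
  have hall : ∀ y, y ∈ P.support := by
    by_contra hnall
    push_neg at hnall
    obtain ⟨x, hx⟩ := hnall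
    -- the component of x in G - P
    set Pset : Set V := {y | y ∈ P.support} with hPset
    have hxc : x ∈ Psetᶜ := by simpa [hPset] using hx
    set C := (G.induce Psetᶜ).connectedComponentMk ⟨x, hxc⟩ with hC
    set Hsupp : Set V := Subtype.val '' C.supp with hHsupp
    have hxH : x ∈ Hsupp := ⟨⟨x, hxc⟩, by rw [ConnectedComponent.mem_supp_iff], rfl⟩
    have hdisj : ∀ y ∈ Hsupp, y ∉ P.support := by
      rintro y ⟨y', hy', rfl⟩
      exact y'.2
    have hconn : ∀ h1 ∈ Hsupp, ∀ h2 ∈ Hsupp,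
        ∃ w : G.Walk h1 h2, w.IsPath ∧ ∀ y ∈ w.support, y ∈ Hsupp :=
      fun h1 hh1 h2 hh2 => CEHelp.comp_conn Psetᶜ C hh1 hh2
    have hclosure : ∀ y, y ∈ Hsupp → ∀ z, G.Adj y z → z ∉ P.support → z ∈ Hsupp := by
      rintro y ⟨y', hy', rfl⟩ z hadj hz
      have hzc : z ∈ Psetᶜ := by simpa [hPset] using hz
      refine ⟨⟨z, hzc⟩, ?_, rfl⟩
      rw [ConnectedComponent.mem_supp_iff] at hy' ⊢
      rw [← hy']
      exact (ConnectedComponent.sound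
        (SimpleGraph.Adj.reachable (by simpa using hadj : (G.induce Psetᶜ).Adj y' ⟨z, hzc⟩))).symm
    -- the attachment set
    set A : Set V := {p : V | p ∈ P.support ∧ ∃ h' ∈ Hsupp, G.Adj p h'} with hA
    have hxA : x ∉ A := fun hxa => hx hxa.1
    have hwalkH : ∀ (c d : (Aᶜ : Set V)) (w : (GDel G A).Walk c d),
        (c : V) ∈ Hsupp → (d : V) ∈ Hsupp := by
      intro c d w
      induction w with
      | nil => exact id
      | cons hadj w ih =>
        rename_i c' e' d'
        intro hc
        apply ih
        have hGadj : G.Adj c' e' := by simpa using hadj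
        have heA : (e' : V) ∉ A := e'.2
        by_cases hes : (e' : V) ∈ P.support
        · exact absurd ⟨hes, ⟨c', hc, hGadj.symm⟩⟩ heA
        · exact hclosure (c' : V) hc e' hGadj hes
    have hcutA : ∀ z : V, z ∉ A → z ∉ Hsupp → IsCutset G A := by
      intro z hzA hzH hpc
      obtain ⟨w⟩ := hpc ⟨x, hxA⟩ ⟨z, hzA⟩
      exact hzH (hwalkH _ _ w hxH)
    have hnd := hP.support_nodup
    by_cases hcase : ∃ a ∈ A, a ≠ v
    · -- main case
      obtain ⟨a₀, ha₀A, ha₀v⟩ := hcase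
      have hexist : ∀ a, a ∈ A → a ≠ v → ∃ z, CEHelp.NextOn P.support a z := by
        intro a haA hav
        obtain ⟨Q, s, hadj, R, hsp⟩ := CEHelp.split_at P haA.1 hav
        exact ⟨s, _, _, CEHelp.support_split Q hadj R hsp⟩
      classical
      set nxt : V → V := fun a =>
        if h' : ∃ z, CEHelp.NextOn P.support a z then h'.choose else a with hnxtdef
      have hnxt : ∀ a, a ∈ A → a ≠ v → CEHelp.NextOn P.support a (nxt a) := by
        intro a haA hav
        have h' := hexist a haA hav
        simp only [hnxtdef, dif_pos h']
        exact h'.choose_spec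
      have hLA : ∀ a, a ∈ A → a ≠ v → ∀ x', x' ∈ Hsupp → ¬ G.Adj (nxt a) x' := by
        intro a haA hav x' hx'
        obtain ⟨haP, h₀, hh₀, hah₀⟩ := haA
        obtain ⟨Q, s, hadj, R, hsp⟩ := CEHelp.split_at P haP hav
        have hne : CEHelp.NextOn P.support a s := ⟨_, _, CEHelp.support_split Q hadj R hsp⟩
        rw [CEHelp.NextOn.functional hnd (hnxt a ⟨haP, h₀, hh₀, hah₀⟩ hav) hne]
        exact CEHelp.no_adj_succ_H P hP hmax Hsupp hdisj hconn Q hadj R hsp hh₀ hah₀ hx'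
      have core : ∀ a b, a ∈ A → a ≠ v → b ∈ A → b ≠ v →
          (∃ (Q : G.Walk u a) (s : V) (hadj : G.Adj a s) (R : G.Walk s v),
            P = Q.append (Walk.cons hadj R) ∧ b ∈ R.support) →
          ¬ G.Adj (nxt a) (nxt b) := by
        rintro a b haA hav hbA hbv ⟨Qa, s, has, Ra, hspa, hbR⟩
        obtain ⟨M0, t, hbt, R', hspb⟩ := CEHelp.split_at Ra hbR hbv
        have hnsa : CEHelp.NextOn P.support a s := ⟨_, _, CEHelp.support_split Qa has Ra hspa⟩
        have hnsb : CEHelp.NextOn P.support b t := by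
          refine ⟨Qa.support ++ M0.support.dropLast, R'.support.tail, ?_⟩
          rw [CEHelp.support_split' Qa has Ra hspa, CEHelp.support_split M0 hbt R' hspb]
          simp
        rw [CEHelp.NextOn.functional hnd (hnxt a haA hav) hnsa,
          CEHelp.NextOn.functional hnd (hnxt b hbA hbv) hnsb]
        exact CEHelp.no_adj_succ_succ P hP hmax Hsupp hdisj hconn Qa has Ra hspa M0 hbt R' hspb
          haA.2.choose_spec.1 haA.2.choose_spec.2 hbA.2.choose_spec.1 hbA.2.choose_spec.2
      have hLB : ∀ a b, a ∈ A → a ≠ v → b ∈ A → b ≠ v → a ≠ b →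
          ¬ G.Adj (nxt a) (nxt b) := by
        intro a b haA hav hbA hbv hab hadj
        obtain ⟨Qa, s, has, Ra, hspa⟩ := CEHelp.split_at P haA.1 hav
        obtain ⟨Qb, t, hbt, Rb, hspb⟩ := CEHelp.split_at P hbA.1 hbv
        have hbP : b ∈ P.support := hbA.1
        rw [CEHelp.support_split' Qa has Ra hspa, List.mem_append] at hbP
        rcases hbP with hbQ | hbR
        · -- b is before a on P
          have hbQ' : b ∈ Qa.support.dropLast := by
            rw [CEHelp.support_concat' Qa, List.mem_append] at hbQ
            rcases hbQ with h' | h'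
            · exact h'
            · simp at h'; exact absurd h'.symm hab
          have haRb : a ∈ Rb.support := by
            have h1 := CEHelp.support_split Qa has Ra hspa
            have h2 := CEHelp.support_split Qb hbt Rb hspb
            have := CEHelp.mem_of_lt_aux hnd h1 h2 hbQ'
            rw [Rb.support_eq_cons]
            exact this
          exact core b a hbA hbv haA hav ⟨Qb, t, hbt, Rb, hspb, haRb⟩ hadj.symm
        · exact core a b haA hav hbA hbv ⟨Qa, s, has, Ra, hspa, hbR⟩ hadj
      -- the independent set
      set I : Set V := insert x (nxt '' (A \ {v})) with hI
      have hIndep : ∀ p ∈ I, ∀ q ∈ I, p ≠ q → ¬ G.Adj p q := by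
        rintro p hp q hq hne hadj
        simp only [hI, Set.mem_insert_iff, Set.mem_image, Set.mem_diff,
          Set.mem_singleton_iff] at hp hq
        rcases hp with rfl | ⟨a, ⟨haA, hav⟩, rfl⟩ <;>
          rcases hq with rfl | ⟨b, ⟨hbA, hbv⟩, rfl⟩
        · exact hne rfl
        · exact hLA b hbA hbv p hxH hadj.symm
        · exact hLA a haA hav q hxH hadj
        · by_cases hab : a = b
          · subst hab; exact hne rfl
          · exact hLB a b haA hav hbA hbv hab hadj
      have hinjOn : Set.InjOn nxt (A \ {v}) := by
        intro a ha b hb he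
        have h1 := hnxt a ha.1 (by simpa using ha.2)
        have h2 := hnxt b hb.1 (by simpa using hb.2)
        rw [he] at h1
        exact CEHelp.NextOn.inj hnd h1 h2
      have hxnot : x ∉ nxt '' (A \ {v}) := by
        rintro ⟨a, ⟨haA, hav⟩, rfl⟩
        exact hx ((hnxt a haA (by simpa using hav)).mem)
      have hIcard : I.ncard = (A \ {v}).ncard + 1 := by
        rw [hI, Set.ncard_insert_of_notMem hxnot (Set.toFinite _),
          Set.ncard_image_of_injOn hinjOn]
      have hAcard : A.ncard ≤ (A \ {v}).ncard + 1 := by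
        calc A.ncard ≤ (insert v (A \ {v})).ncard :=
              Set.ncard_le_ncard (fun y hy => by
                by_cases h' : y = v <;> simp [h', hy]) (Set.toFinite _)
          _ ≤ _ := Set.ncard_insert_le _ _
      -- the cutset
      have hznA : nxt a₀ ∉ A := by
        rintro ⟨hmem, h', hh', hadj⟩
        exact hLA a₀ ha₀A ha₀v h' hh' hadj
      have hznH : nxt a₀ ∉ Hsupp := fun hmem =>
        hdisj _ hmem ((hnxt a₀ ha₀A ha₀v).mem)
      have hcut := hcutA (nxt a₀) hznA hznH
      have h1 : kappa G ≤ A.ncard := CEHelp.kappa_le hcut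
      have h2 : I.ncard ≤ _root_.indepNum G := CEHelp.le_indepNum hIndep
      omega
    · -- degenerate case : A ⊆ {v}
      push_neg at hcase
      have huA : u ∉ A := fun hu' => huv (hcase u hu')
      have huH : u ∉ Hsupp := fun hmem => hdisj u hmem P.start_mem_support
      have hcut := hcutA u huA huH
      have h1 : kappa G ≤ A.ncard := CEHelp.kappa_le hcut
      have h2 : A.ncard ≤ 1 := by
        calc A.ncard ≤ ({v} : Set V).ncard :=
              Set.ncard_le_ncard (fun y hy => hcase y hy) (Set.toFinite _)
          _ = 1 := Set.ncard_singleton _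
      have h3 : (1 : ℕ) ≤ _root_.indepNum G := by
        have := CEHelp.le_indepNum (G := G) (T := {u})
          (fun a ha b hb hab => by simp at ha hb; subst ha; subst hb; exact absurd rfl hab)
        simpa using this
      omega
  exact List.count_eq_one_of_mem hP.support_nodup (hall y)
end
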